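/- arXiv:2206.10506 — 10 statements merged into one kernel-verified Lean document; each statement's English description precedes it below -/
import Mathlib

section
/- Let G be a finite noncyclic group. A proper subgroup H of G appears in some irredundant cover of G (a collection of proper subgroups whose union is G and containing no proper subcover) if and only if H contains a maximal cyclic subgroup of G (a cyclic subgroup not contained in any strictly larger cyclic subgroup). -/
/-- A cover of a group: a finite collection of proper subgroups whose union is the group. -/
def IsCover {G : Type*} [Group G] (S : Finset (Subgroup G)) : Prop :=
  (∀ H ∈ S, H ≠ ⊤) ∧ ∀ g : G, ∃ H ∈ S, g ∈ H

/-- An irredundant cover: a cover with no proper subcollection that is also a cover. -/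
def IsIrredundantCover {G : Type*} [Group G] (S : Finset (Subgroup G)) : Prop :=
  IsCover S ∧ ∀ T : Finset (Subgroup G), T ⊂ S → ¬ IsCover T

/-- β(G): the number of irredundant covers of G. -/
noncomputable def beta (G : Type*) [Group G] : ℕ :=
  Nat.card {S : Finset (Subgroup G) // IsIrredundantCover S}

/-- A maximal cyclic subgroup: cyclic, and not contained in any strictly larger cyclic subgroup. -/
def IsMaximalCyclic {G : Type*} [Group G] (C : Subgroup G) : Prop :=
  IsCyclic ↥C ∧ ∀ D : Subgroup G, IsCyclic ↥D → C ≤ D → D = C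

/-- A cyclically embedded subgroup: ⟨N, x⟩ is cyclic for all x. -/
def CyclicallyEmbedded {G : Type*} [Group G] (N : Subgroup G) : Prop :=
  ∀ x : G, IsCyclic ↥(N ⊔ Subgroup.zpowers x)

/-!
If `H` lies in an irredundant cover `S`, some `g` is covered by `H` alone; the maximal cyclic
subgroup `⟨c⟩ ∋ g` lies in whichever member of `S` contains `c`, and that member contains `g`,
so it is `H`. Conversely, if `⟨c⟩ ≤ H` is maximal cyclic, then `H` together with the maximal
cyclic subgroups not containing `c` covers `G` (every element lies in a maximal cyclic subgroup,
and the only one containing `c` is `⟨c⟩`). Any irredundant subcover must still cover `c`, and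
only `H` does.
-/

lemma isIrredundantCover_iff_minimal {G : Type*} [Group G] {S : Finset (Subgroup G)} :
    IsIrredundantCover S ↔ Minimal IsCover S :=
  minimal_iff_forall_lt.symm

lemma IsCover.exists_isIrredundantCover_subset {G : Type*} [Group G]
    {S : Finset (Subgroup G)} (hS : IsCover S) : ∃ T ⊆ S, IsIrredundantCover T := by
  obtain ⟨T, hTS, hT⟩ := exists_minimal_le_of_wellFoundedLT IsCover S hS
  exact ⟨T, hTS, isIrredundantCover_iff_minimal.mpr hT⟩

lemma IsIrredundantCover.exists_forall_mem_eq {G : Type*} [Group G]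
    {S : Finset (Subgroup G)} (hS : IsIrredundantCover S) {H : Subgroup G} (hH : H ∈ S) :
    ∃ g : G, ∀ K ∈ S, g ∈ K → K = H := by
  classical
  have hproper : ∀ K ∈ S.erase H, K ≠ ⊤ := fun K hK => hS.1.1 K (Finset.mem_of_mem_erase hK)
  obtain ⟨g, hg⟩ : ∃ g : G, ∀ K ∈ S.erase H, g ∉ K := by
    by_contra! hcov
    exact hS.2 _ (Finset.erase_ssubset hH) ⟨hproper, hcov⟩
  exact ⟨g, fun K hK hgK => by_contra fun hKH => hg K (Finset.mem_erase.mpr ⟨hKH, hK⟩) hgK⟩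

lemma IsMaximalCyclic.exists_eq_zpowers {G : Type*} [Group G] {C : Subgroup G}
    (hC : IsMaximalCyclic C) : ∃ c : G, C = Subgroup.zpowers c :=
  let ⟨c, hc⟩ := (C.isCyclic_iff_exists_zpowers_eq_top).mp hC.1
  ⟨c, hc.symm⟩

lemma exists_isMaximalCyclic_mem {G : Type*} [Group G] [Finite G] (g : G) :
    ∃ C : Subgroup G, IsMaximalCyclic C ∧ g ∈ C := by
  obtain ⟨C, -, hC⟩ := exists_maximal_ge_of_wellFoundedGT
    (fun D : Subgroup G => IsCyclic D ∧ g ∈ D) (Subgroup.zpowers g)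
    ⟨inferInstance, Subgroup.mem_zpowers g⟩
  exact ⟨C, ⟨hC.prop.1, fun D hD hCD => (hC.eq_of_le ⟨hD, hCD hC.prop.2⟩ hCD).symm⟩, hC.prop.2⟩

lemma Subgroup.ne_top_of_isCyclic {G : Type*} [Group G] (hG : ¬ IsCyclic G) {D : Subgroup G}
    (hD : IsCyclic D) : D ≠ ⊤ := by
  rintro rfl
  exact hG (Subgroup.topEquiv.isCyclic.mp hD)

noncomputable def maximalCyclicAvoiding {G : Type*} [Group G] [Finite G] (c : G) :
    Finset (Subgroup G) :=
  (Set.toFinite {D : Subgroup G | IsMaximalCyclic D ∧ c ∉ D}).toFinset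

lemma mem_maximalCyclicAvoiding {G : Type*} [Group G] [Finite G] {c : G} {D : Subgroup G} :
    D ∈ maximalCyclicAvoiding c ↔ IsMaximalCyclic D ∧ c ∉ D :=
  Set.Finite.mem_toFinset _

lemma isCover_insert_maximalCyclicAvoiding {G : Type*} [Group G] [Finite G]
    [DecidableEq (Subgroup G)] (hG : ¬ IsCyclic G) {H : Subgroup G} (hH : H ≠ ⊤) {c : G}
    (hc : IsMaximalCyclic (Subgroup.zpowers c)) (hcH : Subgroup.zpowers c ≤ H) :
    IsCover (insert H (maximalCyclicAvoiding c)) := by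
  refine ⟨fun K hK => ?_, fun x => ?_⟩
  · rcases Finset.mem_insert.mp hK with rfl | hK
    · exact hH
    · exact Subgroup.ne_top_of_isCyclic hG (mem_maximalCyclicAvoiding.mp hK).1.1
  · obtain ⟨D, hD, hxD⟩ := exists_isMaximalCyclic_mem x
    by_cases hcD : c ∈ D
    · have hDc : D = Subgroup.zpowers c := hc.2 D hD.1 (Subgroup.zpowers_le.mpr hcD)
      exact ⟨H, Finset.mem_insert_self _ _, hcH (hDc ▸ hxD)⟩
    · exact ⟨D, Finset.mem_insert_of_mem (mem_maximalCyclicAvoiding.mpr ⟨hD, hcD⟩), hxD⟩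

theorem stmt0 {G : Type*} [Group G] [Finite G] (hG : ¬ IsCyclic G)
    (H : Subgroup G) (hH : H ≠ ⊤) :
    (∃ S : Finset (Subgroup G), IsIrredundantCover S ∧ H ∈ S) ↔
      ∃ C : Subgroup G, IsMaximalCyclic C ∧ C ≤ H := by
  classical
  constructor
  · rintro ⟨S, hS, hHS⟩
    obtain ⟨g, hg⟩ := hS.exists_forall_mem_eq hHS
    obtain ⟨C, hC, hgC⟩ := exists_isMaximalCyclic_mem g
    obtain ⟨c, rfl⟩ := hC.exists_eq_zpowers
    obtain ⟨K, hKS, hcK⟩ := hS.1.2 c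
    have hCK : Subgroup.zpowers c ≤ K := Subgroup.zpowers_le.mpr hcK
    exact ⟨_, hC, hg K hKS (hCK hgC) ▸ hCK⟩
  · rintro ⟨C, hC, hCH⟩
    obtain ⟨c, rfl⟩ := hC.exists_eq_zpowers
    obtain ⟨T, hTsub, hT⟩ :=
      (isCover_insert_maximalCyclicAvoiding hG hH hC hCH).exists_isIrredundantCover_subset
    obtain ⟨K, hKT, hcK⟩ := hT.1.2 c
    rcases Finset.mem_insert.mp (hTsub hKT) with rfl | hK
    · exact ⟨T, hT, hKT⟩
    · exact absurd hcK (mem_maximalCyclicAvoiding.mp hK).2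
end

section
/- Let G be a finite group and N a normal subgroup of G. Then the number of irredundant covers of G is at least the number of irredundant covers of G/N. (Here a cyclic group is declared to have 0 irredundant covers.) -/
theorem stmt3 {G : Type*} [Group G] [Finite G] (N : Subgroup G) [N.Normal] :
    beta (G ⧸ N) ≤ beta G := by
  classical
  set f := QuotientGroup.mk' N with hfdef
  have hf : Function.Surjective f := QuotientGroup.mk'_surjective N
  have hcinj : Function.Injective (Subgroup.comap f) := Subgroup.comap_injective hf
  have key : ∀ S : Finset (Subgroup (G ⧸ N)), IsIrredundantCover S →
      IsIrredundantCover (S.image (Subgroup.comap f)) := by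
    intro S hS
    constructor
    · constructor
      · intro H hH
        rcases Finset.mem_image.mp hH with ⟨K, hK, rfl⟩
        intro htop
        exact hS.1.1 K hK (hcinj (by simpa using htop))
      · intro g
        rcases hS.1.2 (f g) with ⟨K, hK, hgK⟩
        exact ⟨Subgroup.comap f K, Finset.mem_image_of_mem _ hK, hgK⟩
    · intro T hT hTcov
      set T' : Finset (Subgroup (G ⧸ N)) := S.filter (fun K => Subgroup.comap f K ∈ T) with hT'
      apply hS.2 T'
      · constructor
        · exact Finset.filter_subset _ _
        · intro hST'
          apply hT.2
          intro H hH
          rcases Finset.mem_image.mp hH with ⟨K, hK, rfl⟩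
          have := hST' hK
          exact (Finset.mem_filter.mp this).2
      · constructor
        · intro K hK
          exact hS.1.1 K (Finset.mem_filter.mp hK).1
        · intro q
          rcases hf q with ⟨g, rfl⟩
          rcases hTcov.2 g with ⟨H, hHT, hgH⟩
          have hHS : H ∈ S.image (Subgroup.comap f) := hT.1 hHT
          rcases Finset.mem_image.mp hHS with ⟨K, hK, rfl⟩
          exact ⟨K, Finset.mem_filter.mpr ⟨hK, hHT⟩, hgH⟩
  let F : {S : Finset (Subgroup (G ⧸ N)) // IsIrredundantCover S} →
      {S : Finset (Subgroup G) // IsIrredundantCover S} :=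
    fun S => ⟨S.1.image (Subgroup.comap f), key S.1 S.2⟩
  have hFinj : Function.Injective F := by
    rintro ⟨S, hS⟩ ⟨T, hT'⟩ h
    simp only [F, Subtype.mk.injEq] at h ⊢
    exact Finset.image_injective hcinj h
  have : Finite (Subgroup G) := by infer_instance
  have : Finite (Finset (Subgroup G)) := by
    have := Fintype.ofFinite (Subgroup G); infer_instance
  have : Finite {S : Finset (Subgroup G) // IsIrredundantCover S} := Subtype.finite
  exact Nat.card_le_card_of_injective F hFinj
end

section
/- Let G be a finite group and n a positive integer with gcd(|G|, n) = 1. Then β(G × ℤ/nℤ) = β(G). -/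
set_option linter.unusedSectionVars false

section Aux

variable {G : Type*} [Group G] [Finite G] {n : ℕ}

lemma pow_n_eq_one (t : Multiplicative (ZMod n)) : t ^ n = 1 := by
  apply Multiplicative.toAdd.injective
  simp [toAdd_pow, nsmul_eq_mul, ZMod.natCast_self]

lemma mem_zpowers_one [NeZero n] (t : Multiplicative (ZMod n)) :
    t ∈ Subgroup.zpowers (Multiplicative.ofAdd (1 : ZMod n)) := by
  have : t = (Multiplicative.ofAdd (1 : ZMod n)) ^ (t.toAdd.val) := by
    apply Multiplicative.toAdd.injective
    simp [toAdd_pow, nsmul_eq_mul, ZMod.natCast_val, ZMod.cast_id]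
  rw [this]
  exact Subgroup.npow_mem_zpowers _ _

lemma fst_one_mem (h : Nat.Coprime (Nat.card G) n)
    {H : Subgroup (G × Multiplicative (ZMod n))} {g : G} {t : Multiplicative (ZMod n)}
    (hm : (g, t) ∈ H) : ((g, 1) : G × Multiplicative (ZMod n)) ∈ H := by
  have hd : (orderOf g).Coprime n := h.coprime_dvd_left (orderOf_dvd_natCard g)
  have hφ : 1 ≤ (orderOf g).totient := Nat.totient_pos.mpr (orderOf_pos g)
  have hmod : n ^ (orderOf g).totient ≡ 1 [MOD orderOf g] := Nat.ModEq.pow_totient hd.symm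
  have hg : g ^ (n ^ (orderOf g).totient) = g := by
    calc g ^ (n ^ (orderOf g).totient) = g ^ 1 := by
          rw [pow_eq_pow_iff_modEq]; exact hmod
      _ = g := pow_one g
  have ht : t ^ (n ^ (orderOf g).totient) = 1 := by
    have he : n ^ (orderOf g).totient = n * n ^ ((orderOf g).totient - 1) := by
      rw [← pow_succ']; congr 1; omega
    rw [he, pow_mul, pow_n_eq_one, one_pow]
  have hp := pow_mem hm (n ^ (orderOf g).totient)
  rwa [Prod.pow_mk, hg, ht] at hp

lemma snd_one_mem (h : Nat.Coprime (Nat.card G) n)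
    {H : Subgroup (G × Multiplicative (ZMod n))} {g : G} {t : Multiplicative (ZMod n)}
    (hm : (g, t) ∈ H) : ((1, t) : G × Multiplicative (ZMod n)) ∈ H := by
  have h1 := fst_one_mem h hm
  have h2 := mul_mem (inv_mem h1) hm
  simpa using h2

lemma map_fst_prod_top (A : Subgroup G) :
    ((A.prod (⊤ : Subgroup (Multiplicative (ZMod n)))).map
      (MonoidHom.fst G (Multiplicative (ZMod n)))) = A := by
  ext g
  simp only [Subgroup.mem_map, Subgroup.mem_prod, Subgroup.mem_top, and_true]
  constructor
  · rintro ⟨⟨a, b⟩, ha, rfl⟩; exact ha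
  · intro hg; exact ⟨(g, 1), hg, rfl⟩

lemma eq_prod_top (h : Nat.Coprime (Nat.card G) n)
    {H : Subgroup (G × Multiplicative (ZMod n))}
    (hs : H.map (MonoidHom.snd G (Multiplicative (ZMod n))) = ⊤) :
    H = (H.map (MonoidHom.fst G (Multiplicative (ZMod n)))).prod ⊤ := by
  ext ⟨g, t⟩
  simp only [Subgroup.mem_prod, Subgroup.mem_map, Subgroup.mem_top, and_true]
  constructor
  · intro hm; exact ⟨(g, t), hm, rfl⟩
  · rintro ⟨⟨g', t'⟩, hm, rfl⟩
    have h1 : ((g', 1) : G × Multiplicative (ZMod n)) ∈ H := fst_one_mem h hm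
    have h2 : t ∈ H.map (MonoidHom.snd G (Multiplicative (ZMod n))) := by
      rw [hs]; trivial
    obtain ⟨⟨g2, t2⟩, hm2, rfl⟩ := h2
    have h3 : ((1, t2) : G × Multiplicative (ZMod n)) ∈ H := snd_one_mem h hm2
    simpa using mul_mem h1 h3

lemma prod_top_eq_top_iff (A : Subgroup G) :
    A.prod (⊤ : Subgroup (Multiplicative (ZMod n))) = ⊤ ↔ A = ⊤ := by
  constructor
  · intro hA
    have := map_fst_prod_top (n := n) A
    rw [hA] at this
    rw [← this]
    ext g
    simp only [Subgroup.mem_map, Subgroup.mem_top, iff_true]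
    exact ⟨(g, 1), trivial, rfl⟩
  · rintro rfl; exact Subgroup.top_prod_top

end Aux

theorem stmt7 {G : Type*} [Group G] [Finite G] (n : ℕ) (hn : 0 < n)
    (h : Nat.Coprime (Nat.card G) n) :
    beta (G × Multiplicative (ZMod n)) = beta G := by
  classical
  haveI : NeZero n := ⟨hn.ne'⟩
  set C := Multiplicative (ZMod n) with hC
  let f : Subgroup G → Subgroup (G × C) := fun A => A.prod ⊤
  let r : Subgroup (G × C) → Subgroup G := fun H => H.map (MonoidHom.fst G C)
  have hrf : ∀ A, r (f A) = A := fun A => map_fst_prod_top A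
  have hftop : ∀ A, f A = ⊤ ↔ A = ⊤ := fun A => prod_top_eq_top_iff A
  -- covers correspond
  have hcov : ∀ S : Finset (Subgroup G), IsCover (S.image f) ↔ IsCover S := by
    intro S
    constructor
    · rintro ⟨ht, hc⟩
      refine ⟨fun A hA hAt => ht (f A) (Finset.mem_image_of_mem f hA) ((hftop A).mpr hAt), ?_⟩
      intro g
      obtain ⟨K, hK, hgK⟩ := hc (g, 1)
      obtain ⟨A, hA, rfl⟩ := Finset.mem_image.mp hK
      exact ⟨A, hA, (Subgroup.mem_prod.mp hgK).1⟩
    · rintro ⟨ht, hc⟩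
      refine ⟨?_, ?_⟩
      · intro K hK
        obtain ⟨A, hA, rfl⟩ := Finset.mem_image.mp hK
        exact fun hKt => ht A hA ((hftop A).mp hKt)
      · rintro ⟨g, t⟩
        obtain ⟨A, hA, hgA⟩ := hc g
        exact ⟨f A, Finset.mem_image_of_mem f hA, Subgroup.mem_prod.mpr ⟨hgA, trivial⟩⟩
  -- representation: every member of an irredundant cover is of the form f A
  have hrep : ∀ S' : Finset (Subgroup (G × C)), IsIrredundantCover S' →
      ∀ H ∈ S', f (r H) = H := by
    intro S' hS' H hH
    have hsnd : H.map (MonoidHom.snd G C) = ⊤ := by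
      by_contra hne
      apply hS'.2 (S'.erase H) (Finset.erase_ssubset hH)
      refine ⟨fun K hK => hS'.1.1 K (Finset.mem_of_mem_erase hK), ?_⟩
      rintro ⟨g, t⟩
      obtain ⟨K, hK, hgK⟩ := hS'.1.2 (g, Multiplicative.ofAdd (1 : ZMod n))
      have hgen : Multiplicative.ofAdd (1 : ZMod n) ∈ K.map (MonoidHom.snd G C) :=
        ⟨(g, Multiplicative.ofAdd (1 : ZMod n)), hgK, rfl⟩
      have hKt : K.map (MonoidHom.snd G C) = ⊤ :=
        eq_top_iff.mpr (fun x _ => Subgroup.zpowers_le.mpr hgen (mem_zpowers_one x))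
      have hKH : K ≠ H := fun he => hne (he ▸ hKt)
      refine ⟨K, Finset.mem_erase.mpr ⟨hKH, hK⟩, ?_⟩
      rw [eq_prod_top h hKt]
      exact Subgroup.mem_prod.mpr ⟨⟨(g, _), hgK, rfl⟩, trivial⟩
    exact (eq_prod_top h hsnd).symm
  have hinj : Function.Injective f := fun a b hab => by rw [← hrf a, hab, hrf b]
  -- irredundant covers correspond
  have hiic : ∀ S : Finset (Subgroup G), IsIrredundantCover (S.image f) ↔ IsIrredundantCover S := by
    intro S
    constructor
    · rintro ⟨hc, hmin⟩
      refine ⟨(hcov S).mp hc, ?_⟩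
      intro T hT hTc
      exact hmin (T.image f)
        ((Finset.image_subset_image hT.subset).ssubset_of_ne
          (fun he => hT.ne (Finset.image_injective hinj he)))
        ((hcov T).mpr hTc)
    · rintro ⟨hc, hmin⟩
      refine ⟨(hcov S).mpr hc, ?_⟩
      intro T hT hTc
      have hTrep : ∀ K ∈ T, f (r K) = K := by
        intro K hK
        obtain ⟨A, _, rfl⟩ := Finset.mem_image.mp (hT.subset hK)
        rw [hrf]
      have hback : (T.image r).image f = T := by
        rw [Finset.image_image]
        calc T.image (f ∘ r) = T.image id := Finset.image_congr (fun K hK => hTrep K hK)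
          _ = T := Finset.image_id
      have hsub : T.image r ⊆ S := by
        intro A hA
        obtain ⟨K, hK, rfl⟩ := Finset.mem_image.mp hA
        obtain ⟨B, hB, rfl⟩ := Finset.mem_image.mp (hT.subset hK)
        rwa [hrf]
      have hss : T.image r ⊂ S := by
        refine hsub.ssubset_of_ne (fun he => hT.ne ?_)
        rw [← hback, he]
      exact hmin (T.image r) hss ((hcov (T.image r)).mp (by rw [hback]; exact hTc))
  apply Nat.card_congr
  refine ⟨fun S' => ⟨S'.1.image r, ?_⟩, fun S => ⟨S.1.image f, (hiic S.1).mpr S.2⟩, ?_, ?_⟩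
  · have hb : (S'.1.image r).image f = S'.1 := by
      rw [Finset.image_image]
      calc S'.1.image (f ∘ r) = S'.1.image id :=
            Finset.image_congr (fun K hK => hrep S'.1 S'.2 K hK)
        _ = S'.1 := Finset.image_id
    exact (hiic _).mp (by rw [hb]; exact S'.2)
  · intro S'
    apply Subtype.ext
    show (S'.1.image r).image f = S'.1
    rw [Finset.image_image]
    calc S'.1.image (f ∘ r) = S'.1.image id :=
          Finset.image_congr (fun K hK => hrep S'.1 S'.2 K hK)
      _ = S'.1 := Finset.image_id
  · intro S
    apply Subtype.ext
    show (S.1.image f).image r = S.1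
    rw [Finset.image_image]
    calc S.1.image (r ∘ f) = S.1.image id := Finset.image_congr (fun A _ => hrf A)
      _ = S.1 := Finset.image_id
end

section
/- For a prime number n ≥ 2, the dihedral group D_{2n} of order 2n has exactly one irredundant cover. -/
open Subgroup

theorem beta_eq_one_of_isLeast {G : Type*} [Group G] {S₀ : Finset (Subgroup G)}
    (h : IsLeast {S | IsCover S} S₀) : beta G = 1 := by
  have hirr : IsIrredundantCover S₀ := ⟨h.1, fun T hT hTc => not_le_of_gt hT (h.2 hTc)⟩
  have huniq (S : Finset (Subgroup G)) (hS : IsIrredundantCover S) : S = S₀ := by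
    by_contra hne
    exact hS.2 S₀ (lt_of_le_of_ne (h.2 hS.1) (Ne.symm hne)) h.1
  have : Unique {S // IsIrredundantCover S} :=
    { default := ⟨S₀, hirr⟩
      uniq := fun S => Subtype.ext (huniq S.1 S.2) }
  exact Nat.card_unique

theorem Subgroup.eq_zpowers_of_prime_card {G : Type*} [Group G] {H : Subgroup G}
    (hH : (Nat.card H).Prime) {g : G} (hg : g ∈ H) (hg1 : g ≠ 1) : H = zpowers g := by
  have : Finite H := Nat.finite_of_card_ne_zero hH.ne_zero
  have hcard : Nat.card (zpowers g) = Nat.card H :=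
    (hH.eq_one_or_self_of_dvd _ (card_dvd_of_le (zpowers_le.2 hg))).resolve_left
      (by rwa [card_eq_one, zpowers_eq_bot])
  exact (eq_of_le_of_card_ge (zpowers_le.2 hg) hcard.ge).symm

section NontrivialProperSubgroups

variable {G : Type*} [Group G]

theorem eq_zpowers_of_ne_top (hprime : ∀ H : Subgroup G, H ≠ ⊤ → H = ⊥ ∨ (Nat.card H).Prime)
    {H : Subgroup G} (hH : H ≠ ⊤) {g : G} (hg : g ∈ H) (hg1 : g ≠ 1) : H = zpowers g :=
  eq_zpowers_of_prime_card
    ((hprime H hH).resolve_left fun hbot => hg1 (mem_bot.1 (hbot ▸ hg))) hg hg1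

variable (G) [Finite G]

noncomputable def nontrivialProperSubgroups : Finset (Subgroup G) :=
  (Set.toFinite {H : Subgroup G | H ≠ ⊥ ∧ H ≠ ⊤}).toFinset

variable {G}

theorem mem_nontrivialProperSubgroups {H : Subgroup G} :
    H ∈ nontrivialProperSubgroups G ↔ H ≠ ⊥ ∧ H ≠ ⊤ :=
  Set.Finite.mem_toFinset _

theorem isCover_nontrivialProperSubgroups (hG : ¬ IsCyclic G) :
    IsCover (nontrivialProperSubgroups G) := by
  have hzpowers (a : G) (ha : a ≠ 1) : zpowers a ∈ nontrivialProperSubgroups G :=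
    mem_nontrivialProperSubgroups.2
      ⟨zpowers_eq_bot.not.2 ha, fun htop => hG (isCyclic_iff_exists_zpowers_eq_top.2 ⟨a, htop⟩)⟩
  refine ⟨fun H hH => (mem_nontrivialProperSubgroups.1 hH).2, fun g => ?_⟩
  by_cases hg : g = 1
  · have : Nontrivial G := not_subsingleton_iff_nontrivial.1 fun _ => hG isCyclic_of_subsingleton
    obtain ⟨a, ha⟩ := exists_ne (1 : G)
    exact ⟨zpowers a, hzpowers a ha, hg ▸ one_mem _⟩
  · exact ⟨zpowers g, hzpowers g hg, mem_zpowers g⟩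

variable (hprime : ∀ H : Subgroup G, H ≠ ⊤ → H = ⊥ ∨ (Nat.card H).Prime)
include hprime

theorem nontrivialProperSubgroups_subset {S : Finset (Subgroup G)} (hS : IsCover S) :
    nontrivialProperSubgroups G ⊆ S := by
  intro H hH
  obtain ⟨hbot, htop⟩ := mem_nontrivialProperSubgroups.1 hH
  obtain ⟨g, hgH, hg1⟩ := H.bot_or_exists_ne_one.resolve_left hbot
  obtain ⟨K, hKS, hgK⟩ := hS.2 g
  rwa [eq_zpowers_of_ne_top hprime htop hgH hg1,
    ← eq_zpowers_of_ne_top hprime (hS.1 K hKS) hgK hg1]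

theorem beta_eq_one_of_proper_subgroups_prime_card (hG : ¬ IsCyclic G) : beta G = 1 :=
  beta_eq_one_of_isLeast
    ⟨isCover_nontrivialProperSubgroups hG, fun _ hS => nontrivialProperSubgroups_subset hprime hS⟩

end NontrivialProperSubgroups

theorem Nat.eq_one_or_prime_of_dvd_mul {p q d : ℕ} (hp : p.Prime) (hq : q.Prime)
    (hd : d ∣ p * q) (hne : d ≠ p * q) : d = 1 ∨ d.Prime := by
  obtain ⟨a, b, ha, hb, rfl⟩ := Nat.dvd_mul.1 hd
  rcases hp.eq_one_or_self_of_dvd a ha with rfl | rfl <;>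
    rcases hq.eq_one_or_self_of_dvd b hb with rfl | rfl
  · simp
  · exact Or.inr (by simpa using hq)
  · exact Or.inr (by simpa using hp)
  · exact absurd rfl hne

theorem DihedralGroup.eq_bot_or_prime_card_of_ne_top {n : ℕ} (hn : n.Prime)
    {H : Subgroup (DihedralGroup n)} (hH : H ≠ ⊤) : H = ⊥ ∨ (Nat.card H).Prime := by
  have : NeZero n := NeZero.of_pos hn.pos
  have hdvd : Nat.card H ∣ 2 * n := nat_card (n := n) ▸ H.card_subgroup_dvd_card
  have hne : Nat.card H ≠ 2 * n := nat_card (n := n) ▸ (card_eq_iff_eq_top H).not.2 hH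
  exact (Nat.eq_one_or_prime_of_dvd_mul Nat.prime_two hn hdvd hne).imp_left card_eq_one.1

theorem stmt8 (n : ℕ) (hn : n.Prime) : beta (DihedralGroup n) = 1 := by
  have : NeZero n := NeZero.of_pos hn.pos
  exact beta_eq_one_of_proper_subgroups_prime_card
    (fun _ => DihedralGroup.eq_bot_or_prime_card_of_ne_top hn)
    (DihedralGroup.not_isCyclic hn.ne_one)
end

section
/- If n ≥ 4 is not prime, then the dihedral group D_{2n} of order 2n has more than two irredundant covers. -/
namespace DCover

open DihedralGroup

variable {n : ℕ}

/-- Membership predicate for our family of subgroups. -/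
def Dmem (M : AddSubgroup (ZMod n)) (i : ZMod n) : DihedralGroup n → Prop
  | DihedralGroup.r j => j ∈ M
  | DihedralGroup.sr j => j - i ∈ M

/-- The subgroup with rotations in `M` and reflections indexed by the coset `i + M`. -/
def Dsub (M : AddSubgroup (ZMod n)) (i : ZMod n) : Subgroup (DihedralGroup n) where
  carrier := {x | Dmem M i x}
  one_mem' := by
    show Dmem M i (DihedralGroup.r 0)
    simpa [Dmem] using M.zero_mem
  mul_mem' := by
    rintro (a | a) (b | b) ha hb <;>
      simp only [Set.mem_setOf_eq, Dmem, r_mul_r, r_mul_sr, sr_mul_r, sr_mul_sr] at *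
    · exact M.add_mem ha hb
    · have : b - a - i = (b - i) + (-a) := by ring
      rw [this]; exact M.add_mem hb (M.neg_mem ha)
    · have : a + b - i = (a - i) + b := by ring
      rw [this]; exact M.add_mem ha hb
    · have : b - a = (b - i) - (a - i) := by ring
      rw [this]; exact M.sub_mem hb ha
  inv_mem' := by
    rintro (a | a) ha <;>
      simp only [Set.mem_setOf_eq, Dmem] at *
    · show Dmem M i (DihedralGroup.r (-a))
      simpa [Dmem] using M.neg_mem ha
    · exact ha

@[simp] lemma r_mem_Dsub {M : AddSubgroup (ZMod n)} {i j : ZMod n} :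
    DihedralGroup.r j ∈ Dsub M i ↔ j ∈ M := Iff.rfl

@[simp] lemma sr_mem_Dsub {M : AddSubgroup (ZMod n)} {i j : ZMod n} :
    DihedralGroup.sr j ∈ Dsub M i ↔ j - i ∈ M := Iff.rfl

/-- The rotation subgroup. -/
def Rot : Subgroup (DihedralGroup n) where
  carrier := {x | ∃ j, x = DihedralGroup.r j}
  one_mem' := ⟨0, rfl⟩
  mul_mem' := by
    rintro (a | a) (b | b) ⟨j, hj⟩ ⟨k, hk⟩ <;> simp_all
  inv_mem' := by
    rintro (a | a) ⟨j, hj⟩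
    · exact ⟨-a, rfl⟩
    · exact absurd hj (by simp)

@[simp] lemma r_mem_Rot {j : ZMod n} : DihedralGroup.r j ∈ (Rot : Subgroup (DihedralGroup n)) :=
  ⟨j, rfl⟩

@[simp] lemma sr_notMem_Rot {j : ZMod n} :
    DihedralGroup.sr j ∉ (Rot : Subgroup (DihedralGroup n)) := by
  rintro ⟨k, hk⟩; exact absurd hk (by simp)

lemma Rot_ne_Dsub {M : AddSubgroup (ZMod n)} {i : ZMod n} : (Rot : Subgroup (DihedralGroup n)) ≠ Dsub M i := by
  intro h
  have : DihedralGroup.sr i ∈ (Rot : Subgroup (DihedralGroup n)) := by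
    rw [h]; simpa using M.zero_mem
  exact sr_notMem_Rot this

lemma Dsub_congr {M : AddSubgroup (ZMod n)} {i i' : ZMod n} (h : i - i' ∈ M) :
    Dsub M i = Dsub M i' := by
  ext x
  rcases x with j | j
  · simp
  · simp only [sr_mem_Dsub]
    constructor
    · intro hj
      have : j - i' = (j - i) + (i - i') := by ring
      rw [this]; exact M.add_mem hj h
    · intro hj
      have : j - i = (j - i') - (i - i') := by ring
      rw [this]; exact M.sub_mem hj h

open Classical in
/-- The cover determined by a choice of rotation subgroup for each reflection coset. -/
noncomputable def Cov [NeZero n] (f : ZMod n → AddSubgroup (ZMod n)) :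
    Finset (Subgroup (DihedralGroup n)) :=
  insert Rot ((Finset.univ : Finset (ZMod n)).image fun i => Dsub (f i) i)

lemma mem_Cov [NeZero n] {f : ZMod n → AddSubgroup (ZMod n)} {H : Subgroup (DihedralGroup n)} :
    H ∈ Cov f ↔ H = Rot ∨ ∃ i, H = Dsub (f i) i := by
  classical
  simp [Cov, eq_comm]

lemma cov_isCover [NeZero n] {f : ZMod n → AddSubgroup (ZMod n)}
    (h1 : ∀ i, (1 : ZMod n) ∉ f i) : IsCover (Cov f) := by
  constructor
  · intro H hH
    rcases mem_Cov.mp hH with rfl | ⟨i, rfl⟩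
    · intro h
      exact sr_notMem_Rot (h ▸ Subgroup.mem_top (DihedralGroup.sr (0 : ZMod n)))
    · intro h
      have : DihedralGroup.r (1 : ZMod n) ∈ Dsub (f i) i := h ▸ Subgroup.mem_top _
      exact h1 i (r_mem_Dsub.mp this)
  · rintro (j | j)
    · exact ⟨Rot, mem_Cov.mpr (Or.inl rfl), r_mem_Rot⟩
    · exact ⟨Dsub (f j) j, mem_Cov.mpr (Or.inr ⟨j, rfl⟩), by simpa using (f j).zero_mem⟩

lemma cov_irred [NeZero n] {f : ZMod n → AddSubgroup (ZMod n)}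
    (h1 : ∀ i, (1 : ZMod n) ∉ f i)
    (hc : ∀ i i', i - i' ∈ f i' → f i = f i') :
    IsIrredundantCover (Cov f) := by
  refine ⟨cov_isCover h1, ?_⟩
  intro T hT hTc
  obtain ⟨H, hHS, hHT⟩ := Finset.exists_of_ssubset hT
  rcases mem_Cov.mp hHS with rfl | ⟨i, rfl⟩
  · -- Rot missing, but r 1 needs Rot
    obtain ⟨H', hH'T, hmem⟩ := hTc.2 (DihedralGroup.r (1 : ZMod n))
    rcases mem_Cov.mp (hT.subset hH'T) with rfl | ⟨i, rfl⟩
    · exact hHT hH'T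
    · exact h1 i (r_mem_Dsub.mp hmem)
  · -- Dsub (f i) i missing, but sr i needs it
    obtain ⟨H', hH'T, hmem⟩ := hTc.2 (DihedralGroup.sr i)
    rcases mem_Cov.mp (hT.subset hH'T) with rfl | ⟨i', rfl⟩
    · exact sr_notMem_Rot hmem
    · have hii' : i - i' ∈ f i' := sr_mem_Dsub.mp hmem
      have hf : f i = f i' := hc i i' hii'
      have : Dsub (f i) i = Dsub (f i') i' := by
        rw [hf]; exact Dsub_congr (hf ▸ hii')
      exact hHT (this ▸ hH'T)

end DCover

theorem stmt9 (n : ℕ) (hn : 4 ≤ n) (hnp : ¬ n.Prime) :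
    2 < beta (DihedralGroup n) := by
  haveI : NeZero n := ⟨by omega⟩
  haveI : Fact (1 < n) := ⟨by omega⟩
  set d := n.minFac with hd
  have hdp : d.Prime := Nat.minFac_prime (by omega)
  have hdn : d ∣ n := Nat.minFac_dvd n
  have hd1 : 1 < d := hdp.one_lt
  haveI : Fact (1 < d) := ⟨hd1⟩
  have hdlt : d < n :=
    lt_of_le_of_ne (Nat.le_of_dvd (by omega) hdn) (fun h => hnp (h ▸ hdp))
  set M : AddSubgroup (ZMod n) := AddSubgroup.zmultiples (d : ZMod n) with hM
  have hdM : (d : ZMod n) ∈ M := AddSubgroup.mem_zmultiples _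
  have hd0 : (d : ZMod n) ≠ 0 := by
    rw [Ne, ZMod.natCast_eq_zero_iff]
    intro h
    exact absurd (Nat.le_of_dvd (by omega) h) (by omega)
  have h1M : (1 : ZMod n) ∉ M := by
    intro h
    obtain ⟨k, hk⟩ := h
    have hk' : k • ((d : ℕ) : ZMod n) = 1 := hk
    have h2 : ((ZMod.castHom hdn (ZMod d)) (k • ((d : ℕ) : ZMod n))) = 1 := by
      rw [hk']; exact map_one _
    rw [map_zsmul, map_natCast, ZMod.natCast_self, smul_zero] at h2
    exact one_ne_zero h2.symm
  have h1bot : (1 : ZMod n) ∉ (⊥ : AddSubgroup (ZMod n)) := by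
    simp
  -- the three covers
  set f1 : ZMod n → AddSubgroup (ZMod n) := fun _ => ⊥ with hf1
  set f2 : ZMod n → AddSubgroup (ZMod n) := fun _ => M with hf2
  set f3 : ZMod n → AddSubgroup (ZMod n) := fun i => if i ∈ M then M else ⊥ with hf3
  have hi1 : IsIrredundantCover (DCover.Cov f1) :=
    DCover.cov_irred (fun _ => h1bot) (by
      intro i i' h
      rfl)
  have hi2 : IsIrredundantCover (DCover.Cov f2) :=
    DCover.cov_irred (fun _ => h1M) (by intro i i' h; rfl)
  have hi3 : IsIrredundantCover (DCover.Cov f3) := by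
    refine DCover.cov_irred ?_ ?_
    · intro i
      simp only [hf3]
      split
      · exact h1M
      · exact h1bot
    · intro i i' h
      simp only [hf3] at h ⊢
      by_cases hi' : i' ∈ M
      · rw [if_pos hi'] at h
        have hi : i ∈ M := by
          have : i = (i - i') + i' := by ring
          rw [this]; exact M.add_mem h hi'
        rw [if_pos hi, if_pos hi']
      · rw [if_neg hi'] at h
        have : i = i' := by
          have := AddSubgroup.mem_bot.mp h
          linear_combination this
        rw [this]
  -- distinguishing subgroups
  have hM0_notmem_f1 : DCover.Dsub M 0 ∉ DCover.Cov f1 := by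
    intro hmem
    rcases DCover.mem_Cov.mp hmem with h | ⟨i, h⟩
    · exact DCover.Rot_ne_Dsub h.symm
    · have : DihedralGroup.r (d : ZMod n) ∈ DCover.Dsub (f1 i) i := h ▸ hdM
      exact hd0 (AddSubgroup.mem_bot.mp (DCover.r_mem_Dsub.mp this))
  have hM0_mem_f2 : DCover.Dsub M 0 ∈ DCover.Cov f2 :=
    DCover.mem_Cov.mpr (Or.inr ⟨0, rfl⟩)
  have hM0_mem_f3 : DCover.Dsub M 0 ∈ DCover.Cov f3 := by
    refine DCover.mem_Cov.mpr (Or.inr ⟨0, ?_⟩)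
    simp only [hf3, if_pos M.zero_mem]
  have hb1_mem_f3 : DCover.Dsub ⊥ 1 ∈ DCover.Cov f3 := by
    refine DCover.mem_Cov.mpr (Or.inr ⟨1, ?_⟩)
    simp only [hf3, if_neg h1M]
  have hb1_notmem_f2 : DCover.Dsub (⊥ : AddSubgroup (ZMod n)) 1 ∉ DCover.Cov f2 := by
    intro hmem
    rcases DCover.mem_Cov.mp hmem with h | ⟨i, h⟩
    · exact DCover.Rot_ne_Dsub h.symm
    · have : DihedralGroup.r (d : ZMod n) ∈ DCover.Dsub (⊥ : AddSubgroup (ZMod n)) 1 :=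
        h.symm ▸ hdM
      exact hd0 (AddSubgroup.mem_bot.mp (DCover.r_mem_Dsub.mp this))
  have h12 : DCover.Cov f1 ≠ DCover.Cov f2 := fun h => hM0_notmem_f1 (h ▸ hM0_mem_f2)
  have h13 : DCover.Cov f1 ≠ DCover.Cov f3 := fun h => hM0_notmem_f1 (h ▸ hM0_mem_f3)
  have h23 : DCover.Cov f2 ≠ DCover.Cov f3 := fun h => hb1_notmem_f2 (h ▸ hb1_mem_f3)
  -- counting
  haveI : Finite {S : Finset (Subgroup (DihedralGroup n)) // IsIrredundantCover S} := by
    infer_instance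
  haveI := Fintype.ofFinite {S : Finset (Subgroup (DihedralGroup n)) // IsIrredundantCover S}
  rw [beta, Nat.card_eq_fintype_card, Fintype.two_lt_card_iff]
  exact ⟨⟨_, hi1⟩, ⟨_, hi2⟩, ⟨_, hi3⟩,
    fun h => h12 (congrArg Subtype.val h),
    fun h => h13 (congrArg Subtype.val h),
    fun h => h23 (congrArg Subtype.val h)⟩
end

section
/- For k ≥ 3, the generalized quaternion group Q_{2^{k+1}} = ⟨x, y : x^{2^k} = 1, y^2 = x^{2^{k-1}}, y x y^{-1} = x^{-1}⟩ has more than two irredundant covers. -/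
/-!
For even `n`, the quaternion group `Q_{4n}` maps onto the Klein four-group: besides
`sign` (is the element a power of `a`?) the exponent of `a` modulo 2 is a homomorphism
`parity`. The kernels of `sign`, `parity` and `parity * sign` are the three subgroups of
index 2, and they form an irredundant cover. Replacing some of them by the cyclic
subgroups `⟨xa j⟩ = {1, xa j, a n, xa (n + j)}` gives two more: `⟨a⟩` with all `⟨xa j⟩`,
and `⟨a⟩`, `ker parity` with the `⟨xa j⟩` for odd `j`. Each member of these covers
contains an element lying in no other member, which makes the cover irredundant. For
`n > 2` the three covers are distinct, since `a 2` lies in every subgroup of index 2 but in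
no `⟨xa j⟩`.
-/

theorem Subgroup.ne_top_of_notMem {G : Type*} [Group G] {H : Subgroup G} {g : G} (hg : g ∉ H) :
    H ≠ ⊤ :=
  fun h => hg (h ▸ mem_top g)

theorem IsCover.isIrredundantCover {G : Type*} [Group G] {S : Finset (Subgroup G)}
    (hS : IsCover S) (h : ∀ H ∈ S, ∃ g : G, ∀ K ∈ S, g ∈ K → K = H) :
    IsIrredundantCover S := by
  refine ⟨hS, fun T hTS hT => ?_⟩
  obtain ⟨H, hHS, hHT⟩ := Finset.exists_of_ssubset hTS
  obtain ⟨g, hg⟩ := h H hHS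
  obtain ⟨K, hKT, hgK⟩ := hT.2 g
  exact hHT (hg K (hTS.subset hKT) hgK ▸ hKT)

theorem two_lt_beta_of_ne {G : Type*} [Group G] [Finite G] {S₁ S₂ S₃ : Finset (Subgroup G)}
    (h₁ : IsIrredundantCover S₁) (h₂ : IsIrredundantCover S₂) (h₃ : IsIrredundantCover S₃)
    (h₁₂ : S₁ ≠ S₂) (h₁₃ : S₁ ≠ S₃) (h₂₃ : S₂ ≠ S₃) : 2 < beta G := by
  have : Finite (Subgroup G) := Finite.of_injective _ SetLike.coe_injective
  calc 2 < ({S₁, S₂, S₃} : Set (Finset (Subgroup G))).ncard :=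
        by rw [Set.ncard_eq_three.mpr ⟨_, _, _, h₁₂, h₁₃, h₂₃, rfl⟩]; norm_num
    _ ≤ {S | IsIrredundantCover S}.ncard := Set.ncard_le_ncard (by simp [Set.insert_subset_iff, *])
    _ = beta G := rfl

namespace QuaternionGroup

open Multiplicative Subgroup Finset

variable {n : ℕ} {i j : ZMod (2 * n)}

def sign : QuaternionGroup n →* Multiplicative (ZMod 2) where
  toFun
    | a _ => 1
    | xa _ => ofAdd 1
  map_one' := rfl
  map_mul' := by
    rintro (i | i) (j | j) <;> simp only [a_mul_a, a_mul_xa, xa_mul_a, xa_mul_xa] <;> decide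

def mod2 : ZMod (2 * n) →+* ZMod 2 := ZMod.castHom (dvd_mul_right 2 n) (ZMod 2)

lemma mod2_one : mod2 (1 : ZMod (2 * n)) = 1 := map_one _

lemma mod2_two : mod2 (2 : ZMod (2 * n)) = 0 := by
  rw [map_ofNat]; rfl

lemma mod2_eq_zero_or_eq_one (i : ZMod (2 * n)) : mod2 i = 0 ∨ mod2 i = 1 := by
  generalize mod2 i = x
  revert x; decide

lemma mod2_natCast_eq_zero_iff (m : ℕ) : mod2 (m : ZMod (2 * n)) = 0 ↔ 2 ∣ m := by
  rw [map_natCast, ZMod.natCast_eq_zero_iff]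

def parity (hn : 2 ∣ n) : QuaternionGroup n →* Multiplicative (ZMod 2) where
  toFun
    | a i => ofAdd (mod2 i)
    | xa i => ofAdd (mod2 i)
  map_one' := by
    show ofAdd (mod2 (0 : ZMod (2 * n))) = 1
    rw [map_zero, ofAdd_zero]
  map_mul' := by
    have hmod : mod2 (n : ZMod (2 * n)) = 0 := (mod2_natCast_eq_zero_iff n).mpr hn
    have h2 : ∀ x y : ZMod 2, y - x = x + y := by decide
    rintro (i | i) (j | j) <;>
      simp only [a_mul_a, a_mul_xa, xa_mul_a, xa_mul_xa, ← ofAdd_add, map_add, map_sub, hmod,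
        zero_add, h2]

lemma a_mem_ker_sign : a i ∈ (sign : QuaternionGroup n →* _).ker := rfl

lemma xa_notMem_ker_sign : xa i ∉ (sign : QuaternionGroup n →* _).ker :=
  show ofAdd (1 : ZMod 2) ≠ 1 by decide

lemma a_mem_ker_parity (hn : 2 ∣ n) : a i ∈ (parity hn).ker ↔ mod2 i = 0 := ofAdd_eq_one

lemma xa_mem_ker_parity (hn : 2 ∣ n) : xa i ∈ (parity hn).ker ↔ mod2 i = 0 := ofAdd_eq_one

lemma a_mem_ker_parity_mul_sign (hn : 2 ∣ n) : a i ∈ (parity hn * sign).ker ↔ mod2 i = 0 := by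
  show ofAdd (mod2 i) * 1 = 1 ↔ _
  rw [mul_one, ofAdd_eq_one]

lemma xa_mem_ker_parity_mul_sign (hn : 2 ∣ n) : xa i ∈ (parity hn * sign).ker ↔ mod2 i = 1 := by
  rw [MonoidHom.mem_ker]
  show ofAdd (mod2 i + 1) = 1 ↔ _
  generalize mod2 i = x
  revert x; decide

lemma a_one_notMem_ker_parity (hn : 2 ∣ n) : a 1 ∉ (parity hn).ker := by
  rw [a_mem_ker_parity, mod2_one]
  exact one_ne_zero

lemma xa_pow_three (j : ZMod (2 * n)) : xa j ^ 3 = xa ((n : ZMod (2 * n)) + j) := by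
  have hn : -(n : ZMod (2 * n)) = n := neg_eq_of_add_eq_zero_right <| by
    rw [← two_mul]; exact_mod_cast ZMod.natCast_self (2 * n)
  rw [pow_succ, xa_sq, a_mul_xa, sub_eq_add_neg, hn, add_comm]

lemma mem_zpowers_xa_iff [NeZero n] {g : QuaternionGroup n} :
    g ∈ zpowers (xa j) ↔ g = 1 ∨ g = xa j ∨ g = a n ∨ g = xa ((n : ZMod (2 * n)) + j) := by
  rw [mem_zpowers_iff_mem_range_orderOf, orderOf_xa, Finset.mem_image]
  constructor
  · rintro ⟨m, hm, rfl⟩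
    rw [Finset.mem_range] at hm
    interval_cases m <;> simp [xa_sq, xa_pow_three]
  · rintro (rfl | rfl | rfl | rfl)
    exacts [⟨0, by simp⟩, ⟨1, by simp⟩, ⟨2, by simp [xa_sq]⟩, ⟨3, by simp [xa_pow_three]⟩]

lemma a_mem_zpowers_xa_iff [NeZero n] : a i ∈ zpowers (xa j) ↔ i = 0 ∨ i = n := by
  simp only [mem_zpowers_xa_iff, one_def, a.injEq, reduceCtorEq, false_or, or_false]

lemma xa_mem_zpowers_xa_iff [NeZero n] :
    xa i ∈ zpowers (xa j) ↔ zpowers (xa i) = zpowers (xa j) := by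
  refine ⟨fun h => ?_, fun h => h ▸ mem_zpowers _⟩
  obtain h | h | h | h := mem_zpowers_xa_iff.mp h
  all_goals simp only [one_def, reduceCtorEq, xa.injEq] at h
  · rw [h]
  · rw [h]
    exact zpowers_inv (g := xa j)

lemma natCast_notMem_zpowers_xa {m : ℕ} (hm : 0 < m) (hmn : m < n) :
    a (m : ZMod (2 * n)) ∉ zpowers (xa j) := by
  have : NeZero n := ⟨by omega⟩
  rw [a_mem_zpowers_xa_iff, ← Nat.cast_zero, ZMod.natCast_eq_natCast_iff',
    ZMod.natCast_eq_natCast_iff', Nat.mod_eq_of_lt (by omega), Nat.mod_eq_of_lt (by omega),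
    Nat.mod_eq_of_lt (by omega)]
  omega

lemma a_one_notMem_zpowers_xa (hn : 1 < n) : a 1 ∉ zpowers (xa j) := by
  simpa using natCast_notMem_zpowers_xa (j := j) one_pos hn

lemma a_two_notMem_zpowers_xa (hn : 2 < n) : a 2 ∉ zpowers (xa j) := by
  simpa using natCast_notMem_zpowers_xa (j := j) two_pos hn

lemma mod2_eq_of_xa_mem_zpowers_xa [NeZero n] (hn : 2 ∣ n) (h : xa i ∈ zpowers (xa j)) :
    mod2 i = mod2 j := by
  obtain h | h | h | h := mem_zpowers_xa_iff.mp h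
  all_goals simp only [one_def, reduceCtorEq, xa.injEq] at h
  · rw [h]
  · rw [h, map_add, (mod2_natCast_eq_zero_iff n).mpr hn, zero_add]

open scoped Classical in
noncomputable def maximalCover (hn : 2 ∣ n) : Finset (Subgroup (QuaternionGroup n)) :=
  {sign.ker, (parity hn).ker, (parity hn * sign).ker}

open scoped Classical in
noncomputable def cyclicCover [NeZero n] : Finset (Subgroup (QuaternionGroup n)) :=
  insert sign.ker (univ.image fun j => zpowers (xa j))

open scoped Classical in
noncomputable def mixedCover [NeZero n] (hn : 2 ∣ n) : Finset (Subgroup (QuaternionGroup n)) :=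
  insert sign.ker <| insert (parity hn).ker <|
    (univ.filter fun j => mod2 j = 1).image fun j => zpowers (xa j)

theorem isIrredundantCover_maximalCover (hn : 2 ∣ n) : IsIrredundantCover (maximalCover hn) := by
  classical
  refine IsCover.isIrredundantCover ⟨?_, ?_⟩ ?_
  · simp only [maximalCover, forall_mem_insert, mem_singleton, forall_eq]
    refine ⟨ne_top_of_notMem (xa_notMem_ker_sign (i := 0)),
      ne_top_of_notMem (a_one_notMem_ker_parity hn), ne_top_of_notMem (g := a 1) ?_⟩
    rw [a_mem_ker_parity_mul_sign, mod2_one]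
    exact one_ne_zero
  · rintro (i | i)
    · exact ⟨sign.ker, by simp [maximalCover], a_mem_ker_sign⟩
    · obtain h | h := mod2_eq_zero_or_eq_one i
      · exact ⟨(parity hn).ker, by simp [maximalCover], (xa_mem_ker_parity hn).mpr h⟩
      · exact ⟨(parity hn * sign).ker, by simp [maximalCover],
          (xa_mem_ker_parity_mul_sign hn).mpr h⟩
  · simp only [maximalCover, forall_mem_insert, mem_singleton, forall_eq]
    refine ⟨⟨a 1, ?_⟩, ⟨xa 0, ?_⟩, ⟨xa 1, ?_⟩⟩ <;>
      simp only [a_mem_ker_sign, xa_notMem_ker_sign, a_mem_ker_parity, xa_mem_ker_parity,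
        a_mem_ker_parity_mul_sign, xa_mem_ker_parity_mul_sign, mod2_one, map_zero, one_ne_zero,
        zero_ne_one, false_implies, implies_true, and_self]

theorem isIrredundantCover_cyclicCover [NeZero n] (hn : 1 < n) :
    IsIrredundantCover (cyclicCover (n := n)) := by
  classical
  refine IsCover.isIrredundantCover ⟨?_, ?_⟩ ?_
  · simp only [cyclicCover, forall_mem_insert, forall_mem_image, mem_univ, forall_const]
    exact ⟨ne_top_of_notMem (xa_notMem_ker_sign (i := 0)),
      fun j => ne_top_of_notMem (a_one_notMem_zpowers_xa hn)⟩
  · rintro (i | i)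
    · exact ⟨sign.ker, mem_insert_self _ _, a_mem_ker_sign⟩
    · exact ⟨zpowers (xa i), mem_insert_of_mem (mem_image_of_mem _ (mem_univ _)), mem_zpowers _⟩
  · simp only [cyclicCover, forall_mem_insert, forall_mem_image, mem_univ, forall_const]
    refine ⟨⟨a 1, fun _ => trivial, fun l h => absurd h (a_one_notMem_zpowers_xa hn)⟩,
      fun j => ⟨xa j, fun h => absurd h xa_notMem_ker_sign,
        fun l h => (xa_mem_zpowers_xa_iff.mp h).symm⟩⟩

theorem isIrredundantCover_mixedCover [NeZero n] (hn : 2 ∣ n) :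
    IsIrredundantCover (mixedCover hn) := by
  classical
  have hn1 : 1 < n := Nat.le_of_dvd (Nat.pos_of_neZero n) hn
  refine IsCover.isIrredundantCover ⟨?_, ?_⟩ ?_
  · simp only [mixedCover, forall_mem_insert, forall_mem_image, mem_filter, mem_univ, true_and]
    exact ⟨ne_top_of_notMem (xa_notMem_ker_sign (i := 0)),
      ne_top_of_notMem (a_one_notMem_ker_parity hn),
      fun j _ => ne_top_of_notMem (a_one_notMem_zpowers_xa hn1)⟩
  · rintro (i | i)
    · exact ⟨sign.ker, mem_insert_self _ _, a_mem_ker_sign⟩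
    · obtain h | h := mod2_eq_zero_or_eq_one i
      · exact ⟨(parity hn).ker, by simp [mixedCover], (xa_mem_ker_parity hn).mpr h⟩
      · exact ⟨zpowers (xa i), mem_insert_of_mem <| mem_insert_of_mem <|
          mem_image_of_mem _ (mem_filter.mpr ⟨mem_univ _, h⟩), mem_zpowers _⟩
  · simp only [mixedCover, forall_mem_insert, forall_mem_image, mem_filter, mem_univ, true_and]
    refine ⟨⟨a 1, fun _ => trivial, ?_, fun l _ h => absurd h (a_one_notMem_zpowers_xa hn1)⟩,
      ⟨xa 0, ?_⟩, fun j hj => ⟨xa j, fun h => absurd h xa_notMem_ker_sign, ?_,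
        fun l _ h => (xa_mem_zpowers_xa_iff.mp h).symm⟩⟩
    · exact fun h => absurd h (a_one_notMem_ker_parity hn)
    · refine ⟨fun h => absurd h xa_notMem_ker_sign, fun _ => trivial, fun l hl h => ?_⟩
      have := mod2_eq_of_xa_mem_zpowers_xa hn h
      rw [map_zero, hl] at this
      exact absurd this zero_ne_one
    · intro h
      rw [xa_mem_ker_parity, hj] at h
      exact absurd h one_ne_zero

lemma ker_parity_notMem_cyclicCover [NeZero n] (hn : 2 ∣ n) (h2 : 2 < n) :
    (parity hn).ker ∉ cyclicCover := by
  simp only [cyclicCover, mem_insert, mem_image, mem_univ, true_and, not_or, not_exists]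
  refine ⟨ne_of_mem_of_not_mem' ((xa_mem_ker_parity hn (i := 0)).mpr (map_zero _))
    xa_notMem_ker_sign, fun j h => a_two_notMem_zpowers_xa (j := j) h2 ?_⟩
  rw [h, a_mem_ker_parity, mod2_two]

lemma ker_parity_mul_sign_notMem_mixedCover [NeZero n] (hn : 2 ∣ n) (h2 : 2 < n) :
    (parity hn * sign).ker ∉ mixedCover hn := by
  have hxa1 : xa 1 ∈ (parity hn * sign).ker := (xa_mem_ker_parity_mul_sign hn).mpr mod2_one
  simp only [mixedCover, mem_insert, mem_image, mem_filter, mem_univ, true_and, not_or,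
    not_exists]
  refine ⟨ne_of_mem_of_not_mem' hxa1 xa_notMem_ker_sign, ne_of_mem_of_not_mem' hxa1 ?_,
    fun j ⟨_, h⟩ => a_two_notMem_zpowers_xa (j := j) h2 ?_⟩
  · rw [xa_mem_ker_parity, mod2_one]
    exact one_ne_zero
  · rw [h, a_mem_ker_parity_mul_sign, mod2_two]

theorem two_lt_beta (hn : 2 ∣ n) (h2 : 2 < n) : 2 < beta (QuaternionGroup n) := by
  have : NeZero n := ⟨by omega⟩
  refine two_lt_beta_of_ne (isIrredundantCover_maximalCover hn)
    (isIrredundantCover_cyclicCover (by omega)) (isIrredundantCover_mixedCover hn) ?_ ?_ ?_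
  · exact ne_of_mem_of_not_mem' (by simp [maximalCover]) (ker_parity_notMem_cyclicCover hn h2)
  · exact ne_of_mem_of_not_mem' (by simp [maximalCover])
      (ker_parity_mul_sign_notMem_mixedCover hn h2)
  · exact (ne_of_mem_of_not_mem' (by simp [mixedCover]) (ker_parity_notMem_cyclicCover hn h2)).symm

end QuaternionGroup

theorem stmt11 (k : ℕ) (hk : 3 ≤ k) :
    2 < beta (QuaternionGroup (2 ^ (k - 1))) :=
  QuaternionGroup.two_lt_beta (dvd_pow_self 2 (by omega))
    (lt_of_lt_of_le (by norm_num) (Nat.pow_le_pow_right two_pos (by omega : 2 ≤ k - 1)))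
end

section
/- The quaternion group Q_8 has exactly one irredundant cover, namely its three cyclic subgroups of order 4. -/
open QuaternionGroup

namespace Stmt12Aux

abbrev Q8 := QuaternionGroup 2

def Hsub (F : Finset Q8) (h1 : (1:Q8) ∈ F) (hm : ∀ x ∈ F, ∀ y ∈ F, x * y ∈ F)
    (hi : ∀ x ∈ F, x⁻¹ ∈ F) : Subgroup Q8 where
  carrier := {x | x ∈ F}
  one_mem' := h1
  mul_mem' := fun hx hy => hm _ hx _ hy
  inv_mem' := fun hx => hi _ hx

def H1 : Subgroup Q8 := Hsub {a 0, a 1, a 2, a 3} (by decide) (by decide) (by decide)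
def H2 : Subgroup Q8 := Hsub {a 0, a 2, xa 0, xa 2} (by decide) (by decide) (by decide)
def H3 : Subgroup Q8 := Hsub {a 0, a 2, xa 1, xa 3} (by decide) (by decide) (by decide)

instance : DecidablePred (· ∈ H1) := fun x =>
  decidable_of_iff (x ∈ ({a 0, a 1, a 2, a 3} : Finset Q8)) Iff.rfl
instance : DecidablePred (· ∈ H2) := fun x =>
  decidable_of_iff (x ∈ ({a 0, a 2, xa 0, xa 2} : Finset Q8)) Iff.rfl
instance : DecidablePred (· ∈ H3) := fun x =>
  decidable_of_iff (x ∈ ({a 0, a 2, xa 1, xa 3} : Finset Q8)) Iff.rfl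

lemma hzp1 : H1 = Subgroup.zpowers (a 1) := by
  refine le_antisymm ?_ (Subgroup.zpowers_le.mpr (by decide))
  intro x hx
  have hx' : x ∈ ({a 0, a 1, a 2, a 3} : Finset Q8) := hx
  fin_cases hx'
  · exact ⟨0, by decide⟩
  · exact ⟨1, by decide⟩
  · exact ⟨2, by decide⟩
  · exact ⟨3, by decide⟩

lemma hzp2 : H2 = Subgroup.zpowers (xa 0) := by
  refine le_antisymm ?_ (Subgroup.zpowers_le.mpr (by decide))
  intro x hx
  have hx' : x ∈ ({a 0, a 2, xa 0, xa 2} : Finset Q8) := hx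
  fin_cases hx'
  · exact ⟨0, by decide⟩
  · exact ⟨2, by decide⟩
  · exact ⟨1, by decide⟩
  · exact ⟨3, by decide⟩

lemma hzp3 : H3 = Subgroup.zpowers (xa 1) := by
  refine le_antisymm ?_ (Subgroup.zpowers_le.mpr (by decide))
  intro x hx
  have hx' : x ∈ ({a 0, a 2, xa 1, xa 3} : Finset Q8) := hx
  fin_cases hx'
  · exact ⟨0, by decide⟩
  · exact ⟨2, by decide⟩
  · exact ⟨1, by decide⟩
  · exact ⟨3, by decide⟩

lemma cyc_zpowers {G : Type*} [Group G] (g : G) : IsCyclic ↥(Subgroup.zpowers g) := by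
  refine ⟨⟨⟨g, Subgroup.mem_zpowers g⟩, ?_⟩⟩
  rintro ⟨x, n, hn⟩
  exact ⟨n, Subtype.ext (by simpa using hn)⟩

lemma cardQ8 : Nat.card Q8 = 8 := by rw [Nat.card_eq_fintype_card]; decide
lemma cardH1 : Nat.card H1 = 4 := by rw [Nat.card_eq_fintype_card]; decide
lemma cardH2 : Nat.card H2 = 4 := by rw [Nat.card_eq_fintype_card]; decide
lemma cardH3 : Nat.card H3 = 4 := by rw [Nat.card_eq_fintype_card]; decide

lemma card4_max {H K : Subgroup Q8} (h4 : Nat.card H = 4) (hle : H ≤ K) (hK : K ≠ ⊤) :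
    K = H := by
  have hiH : H.index = 2 := by
    have h := Subgroup.card_mul_index H
    rw [h4, cardQ8] at h
    omega
  have hd : K.index ∣ H.index := Subgroup.index_dvd_of_le hle
  rw [hiH] at hd
  have hK1 : K.index ≠ 1 := fun h => hK (Subgroup.index_eq_one.mp h)
  have hiK : K.index = 2 := (Nat.Prime.eq_one_or_self_of_dvd Nat.prime_two _ hd).resolve_left hK1
  have hr := Subgroup.relIndex_mul_index hle
  rw [hiK, hiH] at hr
  have : H.relIndex K = 1 := by omega
  exact le_antisymm (Subgroup.relIndex_eq_one.mp this) hle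

lemma eq_H1 {K : Subgroup Q8} (hK : K ≠ ⊤) (h : a 1 ∈ K) : K = H1 :=
  card4_max cardH1 (hzp1 ▸ Subgroup.zpowers_le.mpr h) hK

lemma eq_H2 {K : Subgroup Q8} (hK : K ≠ ⊤) (h : xa 0 ∈ K) : K = H2 :=
  card4_max cardH2 (hzp2 ▸ Subgroup.zpowers_le.mpr h) hK

lemma eq_H3 {K : Subgroup Q8} (hK : K ≠ ⊤) (h : xa 1 ∈ K) : K = H3 :=
  card4_max cardH3 (hzp3 ▸ Subgroup.zpowers_le.mpr h) hK

open scoped Classical in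
noncomputable def S0 : Finset (Subgroup Q8) := {H1, H2, H3}

lemma mem_S0 {H : Subgroup Q8} : H ∈ S0 ↔ H = H1 ∨ H = H2 ∨ H = H3 := by
  simp [S0]

lemma h12 : H1 ≠ H2 := fun h => by
  have : a 1 ∈ H2 := h ▸ (by decide : a 1 ∈ H1)
  exact absurd this (by decide)

lemma h13 : H1 ≠ H3 := fun h => by
  have : a 1 ∈ H3 := h ▸ (by decide : a 1 ∈ H1)
  exact absurd this (by decide)

lemma h23 : H2 ≠ H3 := fun h => by
  have : xa 0 ∈ H3 := h ▸ (by decide : xa 0 ∈ H2)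
  exact absurd this (by decide)

lemma ne_top1 : H1 ≠ ⊤ := fun h => by
  have : xa 0 ∈ H1 := h.symm ▸ Subgroup.mem_top _
  exact absurd this (by decide)

lemma ne_top2 : H2 ≠ ⊤ := fun h => by
  have : a 1 ∈ H2 := h.symm ▸ Subgroup.mem_top _
  exact absurd this (by decide)

lemma ne_top3 : H3 ≠ ⊤ := fun h => by
  have : a 1 ∈ H3 := h.symm ▸ Subgroup.mem_top _
  exact absurd this (by decide)

lemma cover_S0 : IsCover S0 := by
  constructor
  · intro H hH
    rcases mem_S0.mp hH with h | h | h <;> subst h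
    exacts [ne_top1, ne_top2, ne_top3]
  · intro g
    rcases g with i | i <;> fin_cases i
    · exact ⟨H1, mem_S0.mpr (Or.inl rfl), by decide⟩
    · exact ⟨H1, mem_S0.mpr (Or.inl rfl), by decide⟩
    · exact ⟨H1, mem_S0.mpr (Or.inl rfl), by decide⟩
    · exact ⟨H1, mem_S0.mpr (Or.inl rfl), by decide⟩
    · exact ⟨H2, mem_S0.mpr (Or.inr (Or.inl rfl)), by decide⟩
    · exact ⟨H3, mem_S0.mpr (Or.inr (Or.inr rfl)), by decide⟩
    · exact ⟨H2, mem_S0.mpr (Or.inr (Or.inl rfl)), by decide⟩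
    · exact ⟨H3, mem_S0.mpr (Or.inr (Or.inr rfl)), by decide⟩

lemma S0_subset_of_cover {T : Finset (Subgroup Q8)} (hc : IsCover T) : S0 ⊆ T := by
  intro K hK
  obtain ⟨A, hA, hmA⟩ := hc.2 (a 1)
  obtain ⟨B, hB, hmB⟩ := hc.2 (xa 0)
  obtain ⟨C, hC, hmC⟩ := hc.2 (xa 1)
  have hA1 : A = H1 := eq_H1 (hc.1 A hA) hmA
  have hB2 : B = H2 := eq_H2 (hc.1 B hB) hmB
  have hC3 : C = H3 := eq_H3 (hc.1 C hC) hmC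
  rcases mem_S0.mp hK with h | h | h <;> subst h
  exacts [hA1 ▸ hA, hB2 ▸ hB, hC3 ▸ hC]

lemma irr_S0 : IsIrredundantCover S0 := by
  refine ⟨cover_S0, fun T hT hc => ?_⟩
  exact hT.2 (S0_subset_of_cover hc)

lemma uniq_cover {S : Finset (Subgroup Q8)} (hS : IsIrredundantCover S) : S = S0 := by
  have hsub : S0 ⊆ S := S0_subset_of_cover hS.1
  by_contra hne
  exact hS.2 S0 (lt_of_le_of_ne hsub (fun h => hne h.symm)) cover_S0

lemma card_S0 : S0.card = 3 := by
  classical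
  rw [show S0 = {H1, H2, H3} from by simp [S0]]
  rw [Finset.card_insert_of_notMem (by simp [h12, h13]),
    Finset.card_insert_of_notMem (by simp [h23]), Finset.card_singleton]

end Stmt12Aux

open Stmt12Aux in
theorem stmt12 :
    beta (QuaternionGroup 2) = 1 ∧
      ∀ S : Finset (Subgroup (QuaternionGroup 2)), IsIrredundantCover S →
        S.card = 3 ∧ ∀ H ∈ S, IsCyclic ↥H ∧ Nat.card H = 4 := by
  constructor
  · haveI : Unique {S : Finset (Subgroup Q8) // IsIrredundantCover S} :=
      { default := ⟨S0, irr_S0⟩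
        uniq := fun x => Subtype.ext (uniq_cover x.2) }
    exact Nat.card_unique
  · intro S hS
    have hES : S = S0 := uniq_cover hS
    subst hES
    refine ⟨card_S0, fun H hH => ?_⟩
    rcases mem_S0.mp hH with h | h | h <;> subst h
    · exact ⟨hzp1 ▸ cyc_zpowers (a 1), cardH1⟩
    · exact ⟨hzp2 ▸ cyc_zpowers (xa 0), cardH2⟩
    · exact ⟨hzp3 ▸ cyc_zpowers (xa 1), cardH3⟩
end

section
/- For a prime p and n ≥ 2, the abelian group ℤ/p^{n-1}ℤ × ℤ/pℤ has exactly n−1 irredundant covers. -/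
open AddSubgroup Finset
namespace Bcov
open scoped Classical
variable (p n : ℕ)
abbrev Am := ZMod (p ^ (n - 1)) × ZMod p
def Ls (k : ℕ) (t : ZMod p) : AddSubgroup (Am p n) :=
  zmultiples (((p ^ k : ℕ) : ZMod (p ^ (n - 1))), t)
def Ms (k : ℕ) : AddSubgroup (Am p n) :=
  (zmultiples ((p ^ k : ℕ) : ZMod (p ^ (n - 1)))).prod ⊤
variable {p n}

lemma mem_Ls {k : ℕ} {t : ZMod p} {a : Am p n} :
    a ∈ Ls p n k t ↔ ∃ s : ℤ, a.1 = (s : ZMod (p ^ (n - 1))) * (p ^ k : ℕ) ∧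
      a.2 = (s : ZMod p) * t := by
  constructor
  · rintro ⟨s, rfl⟩
    exact ⟨s, by simp [Prod.fst, zsmul_eq_mul], by simp [zsmul_eq_mul]⟩
  · rintro ⟨s, h1, h2⟩
    refine ⟨s, ?_⟩
    ext
    · simp [zsmul_eq_mul, h1]
    · simp [zsmul_eq_mul, h2]

lemma mem_Ms {k : ℕ} {a : Am p n} :
    a ∈ Ms p n k ↔ ∃ s : ℤ, a.1 = (s : ZMod (p ^ (n - 1))) * (p ^ k : ℕ) := by
  unfold Ms
  rw [AddSubgroup.mem_prod]
  simp only [AddSubgroup.mem_top, and_true, mem_zmultiples_iff]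
  constructor
  · rintro ⟨s, hs⟩; exact ⟨s, by rw [← hs]; push_cast [zsmul_eq_mul]; ring⟩
  · rintro ⟨s, h⟩; exact ⟨s, by rw [h]; push_cast [zsmul_eq_mul]; ring⟩


lemma neZeroQ (hp : 0 < p) : NeZero (p ^ (n - 1)) := ⟨pow_ne_zero _ hp.ne'⟩

-- key: equality in ZMod (p^(n-1)) gives integer divisibility
lemma dvd_val_sub (hp : 0 < p) {x : ZMod (p ^ (n - 1))} {s : ℤ}
    (h : x = (s : ZMod (p ^ (n - 1)))) : ((p : ℤ) ^ (n - 1)) ∣ (x.val : ℤ) - s := by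
  haveI := neZeroQ (n := n) hp
  have hx : ((x.val : ℤ) : ZMod (p ^ (n - 1))) = (s : ZMod (p ^ (n - 1))) := by
    push_cast
    rw [ZMod.natCast_val, ZMod.cast_id, h]
  have : (((x.val : ℤ) - s : ℤ) : ZMod (p ^ (n - 1))) = 0 := by
    push_cast at hx ⊢; rw [hx]; ring
  have := (ZMod.intCast_zmod_eq_zero_iff_dvd _ _).mp this
  exact_mod_cast this

-- from x = s * p^k in ZMod (p^(n-1)) with k ≤ n-1, p^k divides x.val
lemma pk_dvd_val (hp : 0 < p) {k : ℕ} (hk : k ≤ n - 1) {x : ZMod (p ^ (n - 1))} {s : ℤ}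
    (h : x = (s : ZMod (p ^ (n - 1))) * (p ^ k : ℕ)) : p ^ k ∣ x.val := by
  have h' : x = ((s * p ^ k : ℤ) : ZMod (p ^ (n - 1))) := by push_cast; rw [h]; push_cast; ring
  have hd := dvd_val_sub hp h'
  have h1 : ((p : ℤ) ^ k) ∣ (x.val : ℤ) - s * p ^ k := dvd_trans (pow_dvd_pow _ hk) hd
  have h2 : ((p : ℤ) ^ k) ∣ (x.val : ℤ) := by
    have h0 : ((p:ℤ) ^ k) ∣ s * p ^ k := Dvd.intro_left _ rfl
    have := dvd_add h1 h0
    simpa using this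
  exact_mod_cast h2

-- from x = s * p^k with k+1 ≤ n-1 and p^(k+1) ∣ x.val, deduce p ∣ s
lemma p_dvd_coeff (hp : 0 < p) {k : ℕ} (hk : k + 1 ≤ n - 1) {x : ZMod (p ^ (n - 1))} {s : ℤ}
    (h : x = (s : ZMod (p ^ (n - 1))) * (p ^ k : ℕ)) (hd : p ^ (k + 1) ∣ x.val) :
    (p : ℤ) ∣ s := by
  have h' : x = ((s * p ^ k : ℤ) : ZMod (p ^ (n - 1))) := by push_cast; rw [h]; push_cast; ring
  have hd1 := dvd_val_sub hp h'
  have h1 : ((p : ℤ) ^ (k + 1)) ∣ (x.val : ℤ) - s * p ^ k :=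
    dvd_trans (pow_dvd_pow _ hk) hd1
  have h2 : ((p : ℤ) ^ (k + 1)) ∣ (x.val : ℤ) := by exact_mod_cast Int.natCast_dvd_natCast.mpr hd
  have h3 : ((p : ℤ) ^ (k + 1)) ∣ s * p ^ k := by
    have := dvd_sub h2 h1
    simpa using this
  have h4 : ((p : ℤ) * p ^ k) ∣ s * p ^ k := by
    rwa [pow_succ, mul_comm ((p:ℤ)^k)] at h3
  have hpk : ((p : ℤ) ^ k) ≠ 0 := pow_ne_zero _ (by exact_mod_cast hp.ne')
  exact (mul_dvd_mul_iff_right hpk).mp h4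

-- the representation lemma
lemma rep_of_dvd (hp : 0 < p) {k : ℕ} {x : ZMod (p ^ (n - 1))} (hd : p ^ k ∣ x.val) :
    x = (((x.val / p ^ k : ℕ) : ℤ) : ZMod (p ^ (n - 1))) * (p ^ k : ℕ) := by
  haveI := neZeroQ (n := n) hp
  obtain ⟨c, hc⟩ := hd
  have hx : x = ((p ^ k * c : ℕ) : ZMod (p ^ (n - 1))) := by
    rw [← hc, ZMod.natCast_val, ZMod.cast_id]
  rw [hc, Nat.mul_div_cancel_left c (pow_pos hp k), hx]
  push_cast; ring

lemma not_p_dvd_quot (hp : 0 < p) {k : ℕ} {x : ZMod (p ^ (n - 1))} (hd : p ^ k ∣ x.val)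
    (hnd : ¬ p ^ (k + 1) ∣ x.val) : ¬ (p : ℤ) ∣ ((x.val / p ^ k : ℕ) : ℤ) := by
  intro hdvd
  have : (p : ℤ) ∣ (x.val / p ^ k : ℕ) := hdvd
  have h2 : p ∣ x.val / p ^ k := by exact_mod_cast this
  exact hnd (by
    obtain ⟨c, hc⟩ := h2
    obtain ⟨d, hd'⟩ := hd
    rw [hd'] at hc ⊢
    rw [Nat.mul_div_cancel_left d (pow_pos hp k)] at hc
    rw [hc, pow_succ]; ring_nf; exact Dvd.intro c rfl)

-- casting integer congruence down to ZMod p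
lemma intCast_p_eq (hp : 0 < p) (hn : 2 ≤ n) {s s' : ℤ}
    (h : ((p : ℤ) ^ (n - 1)) ∣ s - s') : (s : ZMod p) = (s' : ZMod p) := by
  have hp1 : (p : ℤ) ∣ s - s' := dvd_trans (dvd_pow_self _ (by omega)) h
  have : ((s - s' : ℤ) : ZMod p) = 0 := (ZMod.intCast_zmod_eq_zero_iff_dvd _ _).mpr (by exact_mod_cast hp1)
  push_cast at this
  linear_combination this

lemma intCast_p_zero {s : ℤ} (h : (p : ℤ) ∣ s) : (s : ZMod p) = 0 :=
  (ZMod.intCast_zmod_eq_zero_iff_dvd _ _).mpr (by exact_mod_cast h)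

lemma wit_mem_Ls {k : ℕ} {t : ZMod p} :
    ((((p ^ k : ℕ) : ZMod (p ^ (n - 1))), t) : Am p n) ∈ Ls p n k t :=
  mem_Ls.mpr ⟨1, by push_cast; ring, by push_cast; ring⟩

lemma Ls_le_Ms {k : ℕ} {t : ZMod p} : Ls p n k t ≤ Ms p n k := by
  intro a ha
  obtain ⟨s, h1, _⟩ := mem_Ls.mp ha
  exact mem_Ms.mpr ⟨s, h1⟩

lemma Ms_mono {k i : ℕ} (h : k ≤ i) : Ms p n i ≤ Ms p n k := by
  intro a ha
  obtain ⟨s, hs⟩ := mem_Ms.mp ha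
  refine mem_Ms.mpr ⟨s * p ^ (i - k), ?_⟩
  rw [hs]
  push_cast
  rw [mul_assoc, ← pow_add]
  congr 2
  omega

lemma Ms_zero (hp : 0 < p) : Ms p n 0 = ⊤ := by
  haveI := neZeroQ (n := n) hp
  rw [eq_top_iff]
  intro a _
  refine mem_Ms.mpr ⟨(a.1.val : ℤ), ?_⟩
  push_cast
  rw [pow_zero, mul_one, ZMod.natCast_val, ZMod.cast_id]

lemma Ms_last (hp : 0 < p) {B : AddSubgroup (Am p n)} (hBM : B ≤ Ms p n (n - 1))
    (h01 : (((0 : ZMod (p ^ (n - 1))), (1 : ZMod p)) : Am p n) ∈ B) :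
    B = Ms p n (n - 1) := by
  haveI := neZeroQ (n := n) hp
  haveI : NeZero p := ⟨hp.ne'⟩
  refine le_antisymm hBM fun b hb => ?_
  obtain ⟨s, hs⟩ := mem_Ms.mp hb
  have hb1 : b.1 = 0 := by
    rw [hs, ZMod.natCast_self, mul_zero]
  have : b = b.2.val • (((0 : ZMod (p ^ (n - 1))), (1 : ZMod p)) : Am p n) := by
    ext
    · simp [hb1]
    · simp [nsmul_eq_mul, ZMod.natCast_val, ZMod.cast_id]
  rw [this]
  exact nsmul_mem h01 _

lemma mem_Ms_iff_val (hp : 0 < p) {k : ℕ} (hk : k ≤ n - 1) {a : Am p n} :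
    a ∈ Ms p n k ↔ p ^ k ∣ a.1.val := by
  constructor
  · rintro h
    obtain ⟨s, hs⟩ := mem_Ms.mp h
    exact pk_dvd_val hp hk hs
  · intro h
    exact mem_Ms.mpr ⟨_, rep_of_dvd hp h⟩

-- membership of the witness (p^k, t) in L-subgroups
lemma wit_mem_Ls_cases (hp : 2 ≤ p) (hn : 2 ≤ n) {k i : ℕ} (hk : k ≤ n - 2) (hi : i ≤ n - 2)
    {t t' : ZMod p}
    (h : ((((p ^ k : ℕ) : ZMod (p ^ (n - 1))), t) : Am p n) ∈ Ls p n i t') :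
    (i = k ∧ t = t') ∨ t = 0 := by
  have hp0 : 0 < p := by omega
  haveI := neZeroQ (n := n) hp0
  obtain ⟨s, h1, h2⟩ := mem_Ls.mp h
  replace h1 : ((p ^ k : ℕ) : ZMod (p ^ (n - 1))) = (s : ZMod (p ^ (n - 1))) * (p ^ i : ℕ) := h1
  replace h2 : t = (s : ZMod p) * t' := h2
  have h1' : ((p ^ k : ℕ) : ZMod (p ^ (n - 1))) = (((s * p ^ i : ℤ)) : ZMod (p ^ (n - 1))) := by
    rw [h1]; push_cast; ring
  have hdvd := dvd_val_sub hp0 h1'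
  have hval : (((p ^ k : ℕ) : ZMod (p ^ (n - 1)))).val = p ^ k :=
    ZMod.val_cast_of_lt (Nat.pow_lt_pow_right hp (by omega))
  rw [hval] at hdvd
  push_cast at hdvd
  -- hdvd : (p:ℤ)^(n-1) ∣ p^k - s * p^i
  rcases lt_or_ge k i with hki | hik
  · -- i > k : contradiction
    exfalso
    have d1 : ((p:ℤ) ^ (k+1)) ∣ ((p:ℤ)^k - s * p^i) := dvd_trans (pow_dvd_pow _ (by omega)) hdvd
    have d2 : ((p:ℤ) ^ (k+1)) ∣ s * p^i := Dvd.dvd.mul_left (pow_dvd_pow _ (by omega)) s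
    have d3 : ((p:ℤ) ^ (k+1)) ∣ (p:ℤ)^k := by
      have := dvd_add d1 d2; simpa using this
    have d4 : (p : ℕ) ^ (k+1) ∣ p ^ k := by exact_mod_cast d3
    have := Nat.le_of_dvd (pow_pos hp0 k) d4
    exact absurd (Nat.pow_lt_pow_right hp (Nat.lt_succ_self k)) (not_lt.mpr this)
  · rcases eq_or_lt_of_le hik with heq | hlt
    · -- i = k
      subst heq
      left
      refine ⟨rfl, ?_⟩
      have d1 : ((p:ℤ) ^ (i+1)) ∣ ((p:ℤ)^i - s * p^i) := dvd_trans (pow_dvd_pow _ (by omega)) hdvd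
      have d1' : ((p:ℤ) * p ^ i) ∣ (1 - s) * p^i := by
        rw [pow_succ, mul_comm ((p:ℤ)^i)] at d1
        convert d1 using 1; ring
      have hpk : ((p : ℤ) ^ i) ≠ 0 := pow_ne_zero _ (by positivity)
      have d2 : (p:ℤ) ∣ 1 - s := (mul_dvd_mul_iff_right hpk).mp d1'
      have : ((1 - s : ℤ) : ZMod p) = 0 := intCast_p_zero d2
      push_cast at this
      have hs1 : (s : ZMod p) = 1 := by linear_combination -this
      rw [h2, hs1, one_mul]
    · -- i < k : p ∣ s hence t = 0
      right
      have d1 : ((p:ℤ) ^ (i+1)) ∣ ((p:ℤ)^k - s * p^i) := dvd_trans (pow_dvd_pow _ (by omega)) hdvd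
      have d2 : ((p:ℤ) ^ (i+1)) ∣ (p:ℤ)^k := pow_dvd_pow _ (by omega)
      have d3 : ((p:ℤ) ^ (i+1)) ∣ s * p^i := by
        have := dvd_sub d2 d1; simpa using this
      have d4 : ((p:ℤ) * p ^ i) ∣ s * p^i := by rwa [pow_succ, mul_comm ((p:ℤ)^i)] at d3
      have hpk : ((p : ℤ) ^ i) ≠ 0 := pow_ne_zero _ (by positivity)
      have d5 : (p:ℤ) ∣ s := (mul_dvd_mul_iff_right hpk).mp d4
      rw [h2, intCast_p_zero d5, zero_mul]

lemma zero_snd_notMem_Ls (hp : 2 ≤ p) (hn : 2 ≤ n) {i : ℕ} (hi : i ≤ n - 2)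
    {c t : ZMod p} (hc : c ≠ 0) :
    (((0 : ZMod (p ^ (n - 1))), c) : Am p n) ∉ Ls p n i t := by
  intro h
  have hp0 : 0 < p := by omega
  obtain ⟨s, h1, h2⟩ := mem_Ls.mp h
  replace h1 : (0 : ZMod (p ^ (n - 1))) = (s : ZMod (p ^ (n - 1))) * (p ^ i : ℕ) := h1
  replace h2 : c = (s : ZMod p) * t := h2
  have h1' : (0 : ZMod (p ^ (n - 1))) = (((s * p ^ i : ℤ)) : ZMod (p ^ (n - 1))) := by
    rw [h1]; push_cast; ring
  have hdvd := dvd_val_sub hp0 h1'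
  haveI := neZeroQ (n := n) hp0
  rw [ZMod.val_zero] at hdvd
  push_cast at hdvd
  have d1 : ((p:ℤ) ^ (i+1)) ∣ (0 - s * p^i) := dvd_trans (pow_dvd_pow _ (by omega)) hdvd
  have d3 : ((p:ℤ) ^ (i+1)) ∣ s * p^i := by
    have := dvd_neg.mpr d1; simpa using this
  have d4 : ((p:ℤ) * p ^ i) ∣ s * p^i := by rwa [pow_succ, mul_comm ((p:ℤ)^i)] at d3
  have hpk : ((p : ℤ) ^ i) ≠ 0 := pow_ne_zero _ (by positivity)
  have d5 : (p:ℤ) ∣ s := (mul_dvd_mul_iff_right hpk).mp d4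
  rw [h2, intCast_p_zero d5, zero_mul] at hc
  exact hc rfl

-- an element of Ls k t whose first coordinate is divisible by p^(k+1) has zero second coordinate
lemma Ls_snd_zero (hp : 0 < p) (hn : 2 ≤ n) {k : ℕ} (hk : k ≤ n - 2) {t : ZMod p} {a : Am p n}
    (h : a ∈ Ls p n k t) (hd : p ^ (k + 1) ∣ a.1.val) : a.2 = 0 := by
  obtain ⟨s, h1, h2⟩ := mem_Ls.mp h
  have d5 : (p : ℤ) ∣ s := p_dvd_coeff hp (by omega) h1 hd
  rw [h2, intCast_p_zero d5, zero_mul]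

lemma wit_mem_Ms_iff (hp : 2 ≤ p) {k k' : ℕ} (hk : k ≤ n - 2) (hk' : k' ≤ n - 1) {t : ZMod p} :
    ((((p ^ k : ℕ) : ZMod (p ^ (n - 1))), t) : Am p n) ∈ Ms p n k' ↔ k' ≤ k := by
  have hp0 : 0 < p := by omega
  haveI := neZeroQ (n := n) hp0
  constructor
  · intro h
    by_contra hgt
    have hkk : k < k' := by omega
    obtain ⟨s, h1⟩ := mem_Ms.mp h
    replace h1 : ((p ^ k : ℕ) : ZMod (p ^ (n - 1))) = (s : ZMod (p ^ (n - 1))) * (p ^ k' : ℕ) := h1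
    have h1' : ((p ^ k : ℕ) : ZMod (p ^ (n - 1))) = (((s * p ^ k' : ℤ)) : ZMod (p ^ (n - 1))) := by
      rw [h1]; push_cast; ring
    have hdvd := dvd_val_sub hp0 h1'
    have hval : (((p ^ k : ℕ) : ZMod (p ^ (n - 1)))).val = p ^ k :=
      ZMod.val_cast_of_lt (Nat.pow_lt_pow_right hp (by omega))
    rw [hval] at hdvd
    push_cast at hdvd
    have d1 : ((p:ℤ) ^ (k+1)) ∣ ((p:ℤ)^k - s * p^k') := dvd_trans (pow_dvd_pow _ (by omega)) hdvd
    have d2 : ((p:ℤ) ^ (k+1)) ∣ s * p^k' := Dvd.dvd.mul_left (pow_dvd_pow _ (by omega)) s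
    have d3 : ((p:ℤ) ^ (k+1)) ∣ (p:ℤ)^k := by
      have := dvd_add d1 d2; simpa using this
    have d4 : (p : ℕ) ^ (k+1) ∣ p ^ k := by exact_mod_cast d3
    have := Nat.le_of_dvd (pow_pos hp0 k) d4
    exact absurd (Nat.pow_lt_pow_right hp (Nat.lt_succ_self k)) (not_lt.mpr this)
  · intro h
    refine mem_Ms.mpr ⟨(p : ℤ) ^ (k - k'), ?_⟩
    push_cast
    rw [← pow_add]
    congr 1
    omega

-- the key "unit direction" lemma
lemma exists_Ls_of (hp : p.Prime) (hn : 2 ≤ n) {k : ℕ} (hk : k ≤ n - 2) {a : Am p n}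
    (h1 : a ∈ Ms p n k) (h2 : a ∉ Ms p n (k + 1)) :
    ∃ t : ZMod p, a ∈ Ls p n k t ∧
      ((((p ^ k : ℕ) : ZMod (p ^ (n - 1))), t) : Am p n) ∈ zmultiples a ∧
      (t = 0 ↔ a.2 = 0) := by
  have hp0 : 0 < p := hp.pos
  haveI := neZeroQ (n := n) hp0
  haveI : NeZero p := ⟨hp0.ne'⟩
  obtain ⟨s, hs⟩ := mem_Ms.mp h1
  have hkn : k ≤ n - 1 := by omega
  have hdval : p ^ k ∣ a.1.val := pk_dvd_val hp0 hkn hs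
  set w : ℕ := a.1.val / p ^ k with hw
  have hrep : a.1 = (((w : ℕ) : ℤ) : ZMod (p ^ (n - 1))) * (p ^ k : ℕ) :=
    rep_of_dvd hp0 hdval
  have hnd : ¬ p ^ (k + 1) ∣ a.1.val := by
    intro hdd
    exact h2 ((mem_Ms_iff_val hp0 (by omega)).mpr hdd)
  have hw' : ¬ (p : ℤ) ∣ (w : ℤ) := not_p_dvd_quot hp0 hdval hnd
  have hwp : ¬ p ∣ w := by exact_mod_cast hw'
  have hcop : Nat.Coprime w (p ^ (n - 1)) :=
    Nat.Coprime.pow_right _ ((Nat.Prime.coprime_iff_not_dvd hp).mpr hwp).symm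
  have hu : IsUnit ((w : ℕ) : ZMod (p ^ (n - 1))) := (ZMod.isUnit_iff_coprime w _).mpr hcop
  obtain ⟨u, hu'⟩ := hu
  set c : ℕ := ((u⁻¹ : (ZMod (p ^ (n - 1)))ˣ) : ZMod (p ^ (n - 1))).val with hc
  have hcu : ((c : ℕ) : ZMod (p ^ (n - 1))) * ((w : ℕ) : ZMod (p ^ (n - 1))) = 1 := by
    rw [hc, ZMod.natCast_val, ZMod.cast_id, ← hu']
    exact u.inv_mul
  -- cast down to ZMod p
  have hdvdp : p ∣ p ^ (n - 1) := dvd_pow_self p (by omega)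
  have hcw1 : ((c : ℕ) : ZMod p) * ((w : ℕ) : ZMod p) = 1 := by
    have := congrArg (ZMod.castHom hdvdp (ZMod p)) hcu
    simpa only [map_mul, map_natCast, map_one] using this
  have hIcast : (((w : ℕ) : ℤ) : ZMod p) = ((w : ℕ) : ZMod p) := Int.cast_natCast w
  have hIcast' : (((c : ℕ) : ℤ) : ZMod p) = ((c : ℕ) : ZMod p) := Int.cast_natCast c
  have hIcastQ : (((c : ℕ) : ℤ) : ZMod (p ^ (n - 1))) = ((c : ℕ) : ZMod (p ^ (n - 1))) :=
    Int.cast_natCast c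
  refine ⟨(c : ZMod p) * a.2, ?_, ?_, ?_⟩
  · refine mem_Ls.mpr ⟨(w : ℤ), hrep, ?_⟩
    rw [hIcast, ← mul_assoc, mul_comm ((w : ℕ) : ZMod p), hcw1, one_mul]
  · refine mem_zmultiples_iff.mpr ⟨(c : ℤ), ?_⟩
    obtain ⟨a1, a2⟩ := a
    simp only at hrep ⊢
    rw [Prod.smul_mk, Prod.mk.injEq]
    constructor
    · rw [zsmul_eq_mul, hrep, hIcastQ]
      rw [show (((w : ℕ) : ℤ) : ZMod (p ^ (n - 1))) = ((w : ℕ) : ZMod (p ^ (n - 1))) from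
        Int.cast_natCast w]
      rw [← mul_assoc, hcu, one_mul]
    · rw [zsmul_eq_mul, hIcast']
  · constructor
    · intro ht
      have hx : a.2 = ((w : ℕ) : ZMod p) * ((c : ℕ) : ZMod p) * a.2 := by
        rw [mul_comm ((w : ℕ) : ZMod p), hcw1, one_mul]
      rw [hx, mul_assoc, ht, mul_zero]
    · intro ha; rw [ha, mul_zero]

-- sandwich lemma: a subgroup strictly between Ls k t and Ms k must equal Ms k
lemma sandwich (hp : p.Prime) (hn : 2 ≤ n) {k : ℕ} (hk : k ≤ n - 2) {t : ZMod p}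
    {B : AddSubgroup (Am p n)} (hBM : B ≤ Ms p n k) (hLB : Ls p n k t ≤ B)
    (hne : B ≠ Ls p n k t) : B = Ms p n k := by
  have hp0 : 0 < p := hp.pos
  haveI := neZeroQ (n := n) hp0
  haveI : NeZero p := ⟨hp0.ne'⟩
  haveI : Fact p.Prime := ⟨hp⟩
  have hnle : ¬ B ≤ Ls p n k t := fun hle => hne (le_antisymm hle hLB)
  obtain ⟨a, haB, haL⟩ := SetLike.not_le_iff_exists.mp hnle
  obtain ⟨s, hs⟩ := mem_Ms.mp (hBM haB)
  have hd : a.2 ≠ (s : ZMod p) * t := fun h => haL (mem_Ls.mpr ⟨s, hs, h⟩)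
  have hwitB : ((((p ^ k : ℕ) : ZMod (p ^ (n - 1))), t) : Am p n) ∈ B := hLB wit_mem_Ls
  set d : ZMod p := a.2 - (s : ZMod p) * t with hdd
  have h0d : (((0 : ZMod (p ^ (n - 1))), d) : Am p n) ∈ B := by
    have hmem := sub_mem haB (zsmul_mem hwitB s)
    have heq : a - s • ((((p ^ k : ℕ) : ZMod (p ^ (n - 1))), t) : Am p n)
        = (((0 : ZMod (p ^ (n - 1))), d) : Am p n) := by
      rw [Prod.smul_mk]
      have h1 : a = (a.1, a.2) := rfl
      rw [h1, Prod.mk_sub_mk, Prod.mk.injEq]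
      constructor
      · rw [zsmul_eq_mul, hs]; ring
      · rw [zsmul_eq_mul, hdd]
    rwa [heq] at hmem
  have hd0 : d ≠ 0 := sub_ne_zero.mpr hd
  have h01 : (((0 : ZMod (p ^ (n - 1))), (1 : ZMod p)) : Am p n) ∈ B := by
    have hmem := nsmul_mem h0d (d⁻¹).val
    have heq : (d⁻¹).val • (((0 : ZMod (p ^ (n - 1))), d) : Am p n)
        = (((0 : ZMod (p ^ (n - 1))), (1 : ZMod p)) : Am p n) := by
      rw [Prod.smul_mk, Prod.mk.injEq]
      constructor
      · simp
      · rw [nsmul_eq_mul, ZMod.natCast_val, ZMod.cast_id]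
        exact inv_mul_cancel₀ hd0
    rwa [heq] at hmem
  refine le_antisymm hBM fun b hb => ?_
  obtain ⟨s', hs'⟩ := mem_Ms.mp hb
  have hdecomp : b = s' • ((((p ^ k : ℕ) : ZMod (p ^ (n - 1))), t) : Am p n)
      + (b.2 - (s' : ZMod p) * t).val • (((0 : ZMod (p ^ (n - 1))), (1 : ZMod p)) : Am p n) := by
    rw [Prod.smul_mk, Prod.smul_mk, Prod.mk_add_mk]
    have h1 : b = (b.1, b.2) := rfl
    rw [h1, Prod.mk.injEq]
    constructor
    · rw [zsmul_eq_mul, smul_zero, add_zero, hs']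
    · rw [zsmul_eq_mul, nsmul_eq_mul, mul_one, ZMod.natCast_val, ZMod.cast_id]
      ring
  rw [hdecomp]
  exact add_mem (zsmul_mem hwitB _) (nsmul_mem h01 _)

-- any proper subgroup containing (1, j) equals Ls 0 j
lemma proper_eq_Ls_zero (hp : p.Prime) (hn : 2 ≤ n) {j : ZMod p} {B : AddSubgroup (Am p n)}
    (hB : B ≠ ⊤) (h : (((1 : ZMod (p ^ (n - 1))), j) : Am p n) ∈ B) : B = Ls p n 0 j := by
  have hwit : ((((p ^ 0 : ℕ) : ZMod (p ^ (n - 1))), j) : Am p n) ∈ B := by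
    rwa [pow_zero, Nat.cast_one]
  have hLB : Ls p n 0 j ≤ B := zmultiples_le.mpr hwit
  by_contra hne
  have := sandwich hp hn (k := 0) (by omega) (by rw [Ms_zero hp.pos]; exact le_top) hLB
    (fun hh => hne hh)
  rw [Ms_zero hp.pos] at this
  exact hB this

/-! ## Finset-level definitions -/

section FinsetDefs

variable (p n)

/-- The tail part of a candidate cover. -/
noncomputable def TS [NeZero p] (k k' : ℕ) : Finset (AddSubgroup (Am p n)) :=
  ((Finset.Ico k k') ×ˢ (Finset.univ.erase (0 : ZMod p))).image
    (fun it => Ls p n it.1 it.2) ∪ {Ms p n k'}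

/-- The "head" subgroups L_(0,j), all j. -/
noncomputable def HS [NeZero p] : Finset (AddSubgroup (Am p n)) :=
  Finset.univ.image (fun j : ZMod p => Ls p n 0 j)

noncomputable def Lpart [NeZero p] (k : ℕ) : Finset (AddSubgroup (Am p n)) :=
  (Finset.univ.erase (0 : ZMod p)).image (fun t => Ls p n k t)

def XSet (k : ℕ) : Set (Am p n) := {a | a ∈ Ms p n k ∧ a.2 ≠ 0}

def CoversX (k : ℕ) (T : Finset (AddSubgroup (Am p n))) : Prop :=
  ∀ a ∈ XSet p n k, ∃ B ∈ T, a ∈ B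

def MinCX (k : ℕ) (T : Finset (AddSubgroup (Am p n))) : Prop :=
  (∀ B ∈ T, B ≤ Ms p n k) ∧ CoversX p n k T ∧ ∀ U ⊂ T, ¬ CoversX p n k U

end FinsetDefs

variable [NeZero p]

lemma mem_TS {k k' : ℕ} {B : AddSubgroup (Am p n)} :
    B ∈ TS p n k k' ↔ (∃ i t, k ≤ i ∧ i < k' ∧ t ≠ 0 ∧ B = Ls p n i t) ∨ B = Ms p n k' := by
  classical
  unfold TS
  rw [Finset.mem_union, Finset.mem_singleton, Finset.mem_image]
  constructor
  · rintro (⟨⟨i, t⟩, hmem, rfl⟩ | h)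
    · rw [Finset.mem_product, Finset.mem_Ico, Finset.mem_erase] at hmem
      exact Or.inl ⟨i, t, hmem.1.1, hmem.1.2, hmem.2.1, rfl⟩
    · exact Or.inr h
  · rintro (⟨i, t, h1, h2, h3, rfl⟩ | h)
    · exact Or.inl ⟨⟨i, t⟩, by
        rw [Finset.mem_product, Finset.mem_Ico, Finset.mem_erase]
        exact ⟨⟨h1, h2⟩, h3, Finset.mem_univ _⟩, rfl⟩
    · exact Or.inr h

lemma mem_Lpart {k : ℕ} {B : AddSubgroup (Am p n)} :
    B ∈ Lpart p n k ↔ ∃ t : ZMod p, t ≠ 0 ∧ B = Ls p n k t := by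
  classical
  unfold Lpart
  rw [Finset.mem_image]
  constructor
  · rintro ⟨t, ht, rfl⟩
    exact ⟨t, (Finset.mem_erase.mp ht).1, rfl⟩
  · rintro ⟨t, ht, rfl⟩
    exact ⟨t, Finset.mem_erase.mpr ⟨ht, Finset.mem_univ _⟩, rfl⟩

lemma mem_HS {B : AddSubgroup (Am p n)} :
    B ∈ HS p n ↔ ∃ j : ZMod p, B = Ls p n 0 j := by
  classical
  unfold HS
  rw [Finset.mem_image]
  constructor
  · rintro ⟨j, _, rfl⟩; exact ⟨j, rfl⟩
  · rintro ⟨j, rfl⟩; exact ⟨j, Finset.mem_univ _, rfl⟩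

lemma TS_self {k : ℕ} : TS p n k k = {Ms p n k} := by
  classical
  unfold TS
  rw [Finset.Ico_self]
  simp

lemma TS_split {k k' : ℕ} (h : k < k') :
    TS p n k k' = Lpart p n k ∪ TS p n (k + 1) k' := by
  classical
  ext B
  rw [mem_TS, Finset.mem_union, mem_Lpart, mem_TS]
  constructor
  · rintro (⟨i, t, h1, h2, h3, rfl⟩ | h)
    · rcases Nat.eq_or_lt_of_le h1 with rfl | hlt
      · exact Or.inl ⟨t, h3, rfl⟩
      · exact Or.inr (Or.inl ⟨i, t, hlt, h2, h3, rfl⟩)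
    · exact Or.inr (Or.inr h)
  · rintro (⟨t, ht, rfl⟩ | (⟨i, t, h1, h2, h3, rfl⟩ | h))
    · exact Or.inl ⟨k, t, le_refl _, h, ht, rfl⟩
    · exact Or.inl ⟨i, t, by omega, h2, h3, rfl⟩
    · exact Or.inr h

lemma zero_one_mem_XSet (hp : 0 < p) [Fact p.Prime] {k : ℕ} :
    (((0 : ZMod (p ^ (n - 1))), (1 : ZMod p)) : Am p n) ∈ XSet p n k :=
  ⟨mem_Ms.mpr ⟨0, by push_cast; ring⟩, one_ne_zero⟩

lemma wit_mem_XSet {k : ℕ} {t : ZMod p} (ht : t ≠ 0) :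
    ((((p ^ k : ℕ) : ZMod (p ^ (n - 1))), t) : Am p n) ∈ XSet p n k :=
  ⟨Ls_le_Ms wit_mem_Ls, ht⟩

lemma XSet_anti {k : ℕ} : XSet p n (k + 1) ⊆ XSet p n k :=
  fun _ ha => ⟨Ms_mono (Nat.le_succ k) ha.1, ha.2⟩

lemma coversX_singleton_Ms {k : ℕ} : CoversX p n k {Ms p n k} :=
  fun _ ha => ⟨Ms p n k, Finset.mem_singleton_self _, ha.1⟩

theorem claim (hp : p.Prime) (hn : 2 ≤ n) :
    ∀ d k, 1 ≤ k → k ≤ n - 1 → n - 1 - k = d →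
    ∀ T : Finset (AddSubgroup (Am p n)),
      (MinCX p n k T ↔ ∃ k', k ≤ k' ∧ k' ≤ n - 1 ∧ T = TS p n k k') := by
  haveI : Fact p.Prime := ⟨hp⟩
  have hp2 : 2 ≤ p := hp.two_le
  intro d
  induction d with
  | zero =>
    intro k hk1 hk2 hd T
    have hk : k = n - 1 := by omega
    subst hk
    constructor
    · rintro ⟨hle, hcov, hmin⟩
      obtain ⟨B, hBT, hB01⟩ := hcov _ (zero_one_mem_XSet hp.pos)
      have hBeq : B = Ms p n (n - 1) := Ms_last hp.pos (hle B hBT) hB01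
      subst hBeq
      refine ⟨n - 1, le_refl _, le_refl _, ?_⟩
      rw [TS_self]
      have hsub : {Ms p n (n - 1)} ⊆ T := Finset.singleton_subset_iff.mpr hBT
      rcases hsub.ssubset_or_eq with h | h
      · exact absurd (coversX_singleton_Ms) (hmin _ h)
      · exact h.symm
    · rintro ⟨k', h1, h2, rfl⟩
      have : k' = n - 1 := by omega
      subst this
      rw [TS_self]
      refine ⟨?_, ?_, ?_⟩
      · intro B hB
        rw [Finset.mem_singleton] at hB
        exact hB ▸ le_refl _
      · exact coversX_singleton_Ms
      · intro U hU hUcov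
        rw [Finset.ssubset_singleton_iff] at hU
        subst hU
        obtain ⟨B, hB, _⟩ := hUcov _ (zero_one_mem_XSet hp.pos)
        exact absurd hB (Finset.notMem_empty B)
  | succ d ih =>
    intro k hk1 hk2 hd T
    have hk2' : k ≤ n - 2 := by omega
    constructor
    · rintro ⟨hle, hcov, hmin⟩
      by_cases hM : Ms p n k ∈ T
      · refine ⟨k, le_refl _, by omega, ?_⟩
        rw [TS_self]
        have hsub : {Ms p n k} ⊆ T := Finset.singleton_subset_iff.mpr hM
        rcases hsub.ssubset_or_eq with h | h
        · exact absurd (coversX_singleton_Ms) (hmin _ h)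
        · exact h.symm
      · -- the L's at level k are forced to be in T
        have hLT : ∀ t : ZMod p, t ≠ 0 → Ls p n k t ∈ T := by
          intro t ht
          obtain ⟨B, hBT, hBw⟩ := hcov _ (wit_mem_XSet ht)
          have hBM := hle B hBT
          have h1 : ((((p ^ k : ℕ) : ZMod (p ^ (n - 1))), t) : Am p n) ∈ Ms p n k :=
            Ls_le_Ms wit_mem_Ls
          have h2 : ((((p ^ k : ℕ) : ZMod (p ^ (n - 1))), t) : Am p n) ∉ Ms p n (k + 1) := by
            rw [wit_mem_Ms_iff hp2 hk2' (by omega)]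
            omega
          obtain ⟨t₀, hwL, hwitz, ht₀⟩ := exists_Ls_of hp hn hk2' h1 h2
          have ht₀t : t₀ = t := by
            rcases wit_mem_Ls_cases hp2 hn hk2' hk2' hwL with ⟨_, h⟩ | h
            · exact h.symm
            · exact absurd h ht
          subst ht₀t
          have hLB : Ls p n k t₀ ≤ B :=
            zmultiples_le.mpr ((zmultiples_le.mpr hBw) hwitz)
          by_cases hBL : B = Ls p n k t₀
          · exact hBL ▸ hBT
          · exact absurd ((sandwich hp hn hk2' hBM hLB hBL) ▸ hBT) hM
        have hLsub : Lpart p n k ⊆ T := by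
          intro B hB
          obtain ⟨t, ht, rfl⟩ := mem_Lpart.mp hB
          exact hLT t ht
        set T' := T \ Lpart p n k with hT'
        have hT'le : ∀ B ∈ T', B ≤ Ms p n (k + 1) := by
          intro B hBT'
          have hBT := (Finset.mem_sdiff.mp hBT').1
          have hBnL := (Finset.mem_sdiff.mp hBT').2
          intro a haB
          by_contra hna
          have haM : a ∈ Ms p n k := hle B hBT haB
          obtain ⟨t₀, haL, hwitz, ht₀⟩ := exists_Ls_of hp hn hk2' haM hna
          have hLB : Ls p n k t₀ ≤ B :=
            zmultiples_le.mpr ((zmultiples_le.mpr haB) hwitz)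
          by_cases hBL : B = Ls p n k t₀
          · by_cases ht0 : t₀ = 0
            · subst ht0
              -- B has trivial second coordinates, hence is redundant
              have hsnd : ∀ b ∈ B, b.2 = (0 : ZMod p) := by
                intro b hb
                rw [hBL] at hb
                obtain ⟨s, _, h2⟩ := mem_Ls.mp hb
                rw [h2, mul_zero]
              have hUcov : CoversX p n k (T.erase B) := by
                intro x hx
                obtain ⟨C, hCT, hxC⟩ := hcov x hx
                have hCB : C ≠ B := fun h => hx.2 (hsnd x (h ▸ hxC))
                exact ⟨C, Finset.mem_erase.mpr ⟨hCB, hCT⟩, hxC⟩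
              exact absurd hUcov (hmin _ (Finset.erase_ssubset hBT))
            · exact hBnL (mem_Lpart.mpr ⟨t₀, ht0, hBL⟩)
          · exact absurd ((sandwich hp hn hk2' (hle B hBT) hLB hBL) ▸ hBT) hM
        have hT'cov : CoversX p n (k + 1) T' := by
          intro a ha
          obtain ⟨B, hBT, haB⟩ := hcov a (XSet_anti ha)
          refine ⟨B, Finset.mem_sdiff.mpr ⟨hBT, ?_⟩, haB⟩
          intro hBL
          obtain ⟨t, htne, rfl⟩ := mem_Lpart.mp hBL
          exact ha.2 (Ls_snd_zero hp.pos hn hk2' haB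
            ((mem_Ms_iff_val hp.pos (by omega)).mp ha.1))
        have hT'min : ∀ U' ⊂ T', ¬ CoversX p n (k + 1) U' := by
          intro U' hU' hU'cov
          have hUsub : Lpart p n k ∪ U' ⊆ T :=
            Finset.union_subset hLsub (hU'.subset.trans (Finset.sdiff_subset))
          have hUss : Lpart p n k ∪ U' ⊂ T := by
            obtain ⟨B, hBT', hBnU'⟩ := Finset.exists_of_ssubset hU'
            rw [Finset.ssubset_iff_of_subset hUsub]
            refine ⟨B, (Finset.mem_sdiff.mp hBT').1, ?_⟩
            rw [Finset.mem_union]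
            rintro (h | h)
            · exact (Finset.mem_sdiff.mp hBT').2 h
            · exact hBnU' h
          apply hmin _ hUss
          intro a ha
          by_cases hak1 : a ∈ Ms p n (k + 1)
          · obtain ⟨B, hB, haB⟩ := hU'cov a ⟨hak1, ha.2⟩
            exact ⟨B, Finset.mem_union_right _ hB, haB⟩
          · obtain ⟨t₀, haL, _, ht₀⟩ := exists_Ls_of hp hn hk2' ha.1 hak1
            have ht0 : t₀ ≠ 0 := fun h => ha.2 (ht₀.mp h)
            exact ⟨Ls p n k t₀, Finset.mem_union_left _ (mem_Lpart.mpr ⟨t₀, ht0, rfl⟩), haL⟩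
        obtain ⟨k', hk'1, hk'2, hT'eq⟩ :=
          (ih (k + 1) (by omega) (by omega) (by omega) T').mp ⟨hT'le, hT'cov, hT'min⟩
        refine ⟨k', by omega, hk'2, ?_⟩
        rw [TS_split (show k < k' by omega), ← hT'eq, hT']
        exact (Finset.union_sdiff_of_subset hLsub).symm
    · rintro ⟨k', hk'1, hk'2, rfl⟩
      by_cases hkk : k' = k
      · subst hkk
        rw [TS_self]
        refine ⟨?_, coversX_singleton_Ms, ?_⟩
        · intro B hB
          rw [Finset.mem_singleton] at hB
          exact hB ▸ le_refl _
        · intro U hU hUcov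
          rw [Finset.ssubset_singleton_iff] at hU
          subst hU
          obtain ⟨B, hB, _⟩ := hUcov _ (zero_one_mem_XSet hp.pos)
          exact absurd hB (Finset.notMem_empty B)
      · have hklt : k < k' := by omega
        obtain ⟨ihle, ihcov, ihmin⟩ :=
          (ih (k + 1) (by omega) (by omega) (by omega) (TS p n (k + 1) k')).mpr
            ⟨k', by omega, hk'2, rfl⟩
        rw [TS_split hklt]
        refine ⟨?_, ?_, ?_⟩
        · intro B hB
          rcases Finset.mem_union.mp hB with h | h
          · obtain ⟨t, _, rfl⟩ := mem_Lpart.mp h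
            exact Ls_le_Ms
          · exact (ihle B h).trans (Ms_mono (Nat.le_succ k))
        · intro a ha
          by_cases hak1 : a ∈ Ms p n (k + 1)
          · obtain ⟨B, hB, haB⟩ := ihcov a ⟨hak1, ha.2⟩
            exact ⟨B, Finset.mem_union_right _ hB, haB⟩
          · obtain ⟨t₀, haL, _, ht₀⟩ := exists_Ls_of hp hn hk2' ha.1 hak1
            have ht0 : t₀ ≠ 0 := fun h => ha.2 (ht₀.mp h)
            exact ⟨Ls p n k t₀, Finset.mem_union_left _ (mem_Lpart.mpr ⟨t₀, ht0, rfl⟩), haL⟩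
        · intro U hU hUcov
          have hLU : Lpart p n k ⊆ U := by
            intro B hB
            obtain ⟨t, ht, rfl⟩ := mem_Lpart.mp hB
            obtain ⟨C, hCU, hCw⟩ := hUcov _ (wit_mem_XSet ht)
            have hCT : C ∈ Lpart p n k ∪ TS p n (k + 1) k' := hU.subset hCU
            rcases Finset.mem_union.mp hCT with h | h
            · obtain ⟨t', ht', rfl⟩ := mem_Lpart.mp h
              have : t' = t := by
                rcases wit_mem_Ls_cases hp2 hn hk2' hk2' hCw with ⟨_, hh⟩ | hh
                · exact hh.symm
                · exact absurd hh ht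
              exact this ▸ hCU
            · exfalso
              have := ihle C h hCw
              rw [wit_mem_Ms_iff hp2 hk2' (by omega)] at this
              omega
          set U' := U \ Lpart p n k with hU'def
          have hU'ss : U' ⊂ TS p n (k + 1) k' := by
            have hsub1 : U' ⊆ TS p n (k + 1) k' := by
              intro B hB
              have h1 := (Finset.mem_sdiff.mp hB).1
              have h2 := (Finset.mem_sdiff.mp hB).2
              rcases Finset.mem_union.mp (hU.subset h1) with h | h
              · exact absurd h h2
              · exact h
            have hne : U' ≠ TS p n (k + 1) k' := by
              intro heq
              apply hU.2
              have : Lpart p n k ∪ U' ⊆ U := Finset.union_subset hLU Finset.sdiff_subset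
              rwa [heq] at this
            exact Finset.ssubset_iff_subset_ne.mpr ⟨hsub1, hne⟩
          apply ihmin U' hU'ss
          intro a ha
          obtain ⟨B, hBU, haB⟩ := hUcov a (XSet_anti ha)
          refine ⟨B, Finset.mem_sdiff.mpr ⟨hBU, ?_⟩, haB⟩
          intro hBL
          obtain ⟨t, htne, rfl⟩ := mem_Lpart.mp hBL
          exact ha.2 (Ls_snd_zero hp.pos hn hk2' haB
            ((mem_Ms_iff_val hp.pos (by omega)).mp ha.1))

lemma one_fst_notMem_Ls (hp : 2 ≤ p) (hn : 2 ≤ n) {i : ℕ} (hi : 1 ≤ i) {c t : ZMod p} :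
    (((1 : ZMod (p ^ (n - 1))), c) : Am p n) ∉ Ls p n i t := by
  intro h
  have hp0 : 0 < p := by omega
  haveI := neZeroQ (n := n) hp0
  haveI : Fact (1 < p ^ (n - 1)) := ⟨by
    calc 1 < p := hp
    _ ≤ p ^ (n - 1) := Nat.le_self_pow (by omega) p⟩
  obtain ⟨s, h1, _⟩ := mem_Ls.mp h
  replace h1 : (1 : ZMod (p ^ (n - 1))) = (s : ZMod (p ^ (n - 1))) * (p ^ i : ℕ) := h1
  have h1' : (1 : ZMod (p ^ (n - 1))) = (((s * p ^ i : ℤ)) : ZMod (p ^ (n - 1))) := by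
    rw [h1]; push_cast; ring
  have hdvd := dvd_val_sub hp0 h1'
  rw [ZMod.val_one] at hdvd
  have d1 : (p : ℤ) ∣ (1 - s * p ^ i) := dvd_trans (dvd_pow_self _ (by omega)) hdvd
  have d2 : (p : ℤ) ∣ s * p ^ i := Dvd.dvd.mul_left (dvd_pow_self _ (by omega)) s
  have d3 : (p : ℤ) ∣ 1 := by
    have := dvd_add d1 d2; simpa using this
  have := Int.le_of_dvd one_pos d3
  omega

lemma one_fst_notMem_Ms (hp : 2 ≤ p) (hn : 2 ≤ n) {k : ℕ} (hk : 1 ≤ k) {c : ZMod p} :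
    (((1 : ZMod (p ^ (n - 1))), c) : Am p n) ∉ Ms p n k := by
  intro h
  have hp0 : 0 < p := by omega
  haveI := neZeroQ (n := n) hp0
  haveI : Fact (1 < p ^ (n - 1)) := ⟨by
    calc 1 < p := hp
    _ ≤ p ^ (n - 1) := Nat.le_self_pow (by omega) p⟩
  obtain ⟨s, h1⟩ := mem_Ms.mp h
  replace h1 : (1 : ZMod (p ^ (n - 1))) = (s : ZMod (p ^ (n - 1))) * (p ^ k : ℕ) := h1
  have h1' : (1 : ZMod (p ^ (n - 1))) = (((s * p ^ k : ℤ)) : ZMod (p ^ (n - 1))) := by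
    rw [h1]; push_cast; ring
  have hdvd := dvd_val_sub hp0 h1'
  rw [ZMod.val_one] at hdvd
  have d1 : (p : ℤ) ∣ (1 - s * p ^ k) := dvd_trans (dvd_pow_self _ (by omega)) hdvd
  have d2 : (p : ℤ) ∣ s * p ^ k := Dvd.dvd.mul_left (dvd_pow_self _ (by omega)) s
  have d3 : (p : ℤ) ∣ 1 := by
    have := dvd_add d1 d2; simpa using this
  have := Int.le_of_dvd one_pos d3
  omega

lemma one_j_mem_Ls0 {j : ZMod p} : (((1 : ZMod (p ^ (n - 1))), j) : Am p n) ∈ Ls p n 0 j :=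
  mem_Ls.mpr ⟨1, by push_cast; ring, by push_cast; ring⟩

lemma snd_zero_mem_Ls0 (hp : 0 < p) {x : ZMod (p ^ (n - 1))} :
    ((x, (0 : ZMod p)) : Am p n) ∈ Ls p n 0 0 := by
  haveI := neZeroQ (n := n) hp
  refine mem_Ls.mpr ⟨(x.val : ℤ), ?_, by push_cast; ring⟩
  push_cast
  rw [pow_zero, mul_one, ZMod.natCast_val, ZMod.cast_id]

lemma Ls_ne_top (hp : 2 ≤ p) (hn : 2 ≤ n) {i : ℕ} (hi : i ≤ n - 2) {t : ZMod p} :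
    Ls p n i t ≠ ⊤ := by
  intro h
  haveI : Fact (1 < p) := ⟨hp⟩
  exact zero_snd_notMem_Ls hp hn hi (one_ne_zero) (h ▸ AddSubgroup.mem_top _)

lemma Ms_ne_top (hp : 2 ≤ p) (hn : 2 ≤ n) {k : ℕ} (hk : 1 ≤ k) : Ms p n k ≠ ⊤ := by
  intro h
  exact one_fst_notMem_Ms hp hn hk (c := 0) (h ▸ AddSubgroup.mem_top _)

/-- Additive version of `IsCover`. -/
def IsCoverA (p n : ℕ) (S : Finset (AddSubgroup (Am p n))) : Prop :=
  (∀ B ∈ S, B ≠ ⊤) ∧ ∀ a : Am p n, ∃ B ∈ S, a ∈ B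

/-- Additive version of `IsIrredundantCover`. -/
def IsIrredCoverA (p n : ℕ) (S : Finset (AddSubgroup (Am p n))) : Prop :=
  IsCoverA p n S ∧ ∀ T ⊂ S, ¬ IsCoverA p n T

theorem top_classification (hp : p.Prime) (hn : 2 ≤ n)
    (S : Finset (AddSubgroup (Am p n))) :
    IsIrredCoverA p n S ↔ ∃ k', 1 ≤ k' ∧ k' ≤ n - 1 ∧ S = HS p n ∪ TS p n 1 k' := by
  haveI : Fact p.Prime := ⟨hp⟩
  have hp2 : 2 ≤ p := hp.two_le
  have hn1 : 1 ≤ n - 1 := by omega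
  have h0n2 : (0 : ℕ) ≤ n - 2 := by omega
  -- HS ∪ T covers everything whenever T covers XSet 1
  have hcovall : ∀ (T : Finset (AddSubgroup (Am p n))), CoversX p n 1 T →
      ∀ a : Am p n, ∃ B, (B ∈ HS p n ∨ B ∈ T) ∧ a ∈ B := by
    intro T hT a
    by_cases ha1 : a ∈ Ms p n 1
    · by_cases ha2 : a.2 = 0
      · refine ⟨Ls p n 0 0, Or.inl (mem_HS.mpr ⟨0, rfl⟩), ?_⟩
        have : a = (a.1, (0 : ZMod p)) := by rw [← ha2]
        rw [this]
        exact snd_zero_mem_Ls0 hp.pos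
      · obtain ⟨B, hB, haB⟩ := hT a ⟨ha1, ha2⟩
        exact ⟨B, Or.inr hB, haB⟩
    · have ha0 : a ∈ Ms p n 0 := by rw [Ms_zero hp.pos]; trivial
      obtain ⟨t, haL, _, _⟩ := exists_Ls_of hp hn h0n2 ha0 (by simpa using ha1)
      exact ⟨Ls p n 0 t, Or.inl (mem_HS.mpr ⟨t, rfl⟩), haL⟩
  -- HS members contain no points of XSet 1
  have hHSX : ∀ (j : ZMod p) (a : Am p n), a ∈ Ls p n 0 j → a ∈ XSet p n 1 → False := by
    intro j a haL haX
    have hval : p ^ (0 + 1) ∣ a.1.val := by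
      simpa using (mem_Ms_iff_val hp.pos (le_refl 1 |>.trans (by omega))).mp haX.1
    exact haX.2 (Ls_snd_zero hp.pos hn h0n2 haL hval)
  -- HS is disjoint from TS 1 k'
  have hdisj : ∀ k', k' ≤ n - 1 → 1 ≤ k' → ∀ j : ZMod p, Ls p n 0 j ∉ TS p n 1 k' := by
    intro k' hk' hk'1 j hmem
    rcases mem_TS.mp hmem with ⟨i, t, hi1, hi2, ht, heq⟩ | heq
    · exact one_fst_notMem_Ls hp2 hn hi1 (heq ▸ one_j_mem_Ls0)
    · exact one_fst_notMem_Ms hp2 hn hk'1 (heq ▸ one_j_mem_Ls0)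
  constructor
  · rintro ⟨⟨hproper, hcov⟩, hmin⟩
    -- every Ls 0 j is in S
    have hHSsub : HS p n ⊆ S := by
      intro B hB
      obtain ⟨j, rfl⟩ := mem_HS.mp hB
      obtain ⟨C, hCS, hCmem⟩ := hcov ((1 : ZMod (p ^ (n - 1))), j)
      have : C = Ls p n 0 j := proper_eq_Ls_zero hp hn (hproper C hCS) hCmem
      exact this ▸ hCS
    set T := S \ HS p n with hTdef
    have hTle : ∀ B ∈ T, B ≤ Ms p n 1 := by
      intro B hBT
      have hBS := (Finset.mem_sdiff.mp hBT).1
      have hBnH := (Finset.mem_sdiff.mp hBT).2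
      intro a haB
      by_contra hna
      have ha0 : a ∈ Ms p n 0 := by rw [Ms_zero hp.pos]; trivial
      obtain ⟨t, haL, hwitz, _⟩ := exists_Ls_of hp hn h0n2 ha0 (by simpa using hna)
      have hLB : Ls p n 0 t ≤ B := zmultiples_le.mpr ((zmultiples_le.mpr haB) hwitz)
      by_cases hBL : B = Ls p n 0 t
      · exact hBnH (mem_HS.mpr ⟨t, hBL⟩)
      · have := sandwich hp hn h0n2 (by rw [Ms_zero hp.pos]; exact le_top) hLB hBL
        rw [Ms_zero hp.pos] at this
        exact hproper B hBS this
    have hTcov : CoversX p n 1 T := by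
      intro a ha
      obtain ⟨B, hBS, haB⟩ := hcov a
      refine ⟨B, Finset.mem_sdiff.mpr ⟨hBS, ?_⟩, haB⟩
      intro hBH
      obtain ⟨j, rfl⟩ := mem_HS.mp hBH
      exact hHSX j a haB ha
    have hTmin : ∀ U ⊂ T, ¬ CoversX p n 1 U := by
      intro U hU hUcov
      have hsub : HS p n ∪ U ⊆ S :=
        Finset.union_subset hHSsub (hU.subset.trans Finset.sdiff_subset)
      have hss : HS p n ∪ U ⊂ S := by
        obtain ⟨B, hBT, hBnU⟩ := Finset.exists_of_ssubset hU
        rw [Finset.ssubset_iff_of_subset hsub]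
        refine ⟨B, (Finset.mem_sdiff.mp hBT).1, ?_⟩
        rw [Finset.mem_union]
        rintro (h | h)
        · exact (Finset.mem_sdiff.mp hBT).2 h
        · exact hBnU h
      apply hmin _ hss
      refine ⟨?_, ?_⟩
      · intro B hB
        rcases Finset.mem_union.mp hB with h | h
        · obtain ⟨j, rfl⟩ := mem_HS.mp h
          exact Ls_ne_top hp2 hn h0n2
        · exact hproper B (hU.subset.trans Finset.sdiff_subset h)
      · intro a
        obtain ⟨B, hB, haB⟩ := hcovall U hUcov a
        exact ⟨B, Finset.mem_union.mpr (by tauto), haB⟩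
    obtain ⟨k', hk'1, hk'2, hTeq⟩ :=
      (claim hp hn (n - 1 - 1) 1 (le_refl 1) hn1 rfl T).mp ⟨hTle, hTcov, hTmin⟩
    refine ⟨k', hk'1, hk'2, ?_⟩
    rw [← hTeq, hTdef]
    exact (Finset.union_sdiff_of_subset hHSsub).symm
  · rintro ⟨k', hk'1, hk'2, rfl⟩
    obtain ⟨hTle, hTcov, hTmin⟩ :=
      (claim hp hn (n - 1 - 1) 1 (le_refl 1) hn1 rfl (TS p n 1 k')).mpr ⟨k', hk'1, hk'2, rfl⟩
    have hproper : ∀ B ∈ HS p n ∪ TS p n 1 k', B ≠ ⊤ := by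
      intro B hB
      rcases Finset.mem_union.mp hB with h | h
      · obtain ⟨j, rfl⟩ := mem_HS.mp h
        exact Ls_ne_top hp2 hn h0n2
      · rcases mem_TS.mp h with ⟨i, t, hi1, hi2, ht, rfl⟩ | rfl
        · exact Ls_ne_top hp2 hn (by omega)
        · exact Ms_ne_top hp2 hn hk'1
    refine ⟨⟨hproper, ?_⟩, ?_⟩
    · intro a
      obtain ⟨B, hB, haB⟩ := hcovall (TS p n 1 k') hTcov a
      exact ⟨B, Finset.mem_union.mpr (by tauto), haB⟩
    · intro U hU hUcov
      -- each Ls 0 j must lie in U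
      have hHSU : HS p n ⊆ U := by
        intro B hB
        obtain ⟨j, rfl⟩ := mem_HS.mp hB
        obtain ⟨C, hCU, hCmem⟩ := hUcov.2 ((1 : ZMod (p ^ (n - 1))), j)
        have : C = Ls p n 0 j := proper_eq_Ls_zero hp hn (hUcov.1 C hCU) hCmem
        exact this ▸ hCU
      set U' := U \ HS p n with hU'def
      have hU'ss : U' ⊂ TS p n 1 k' := by
        have hsub1 : U' ⊆ TS p n 1 k' := by
          intro B hB
          have h1 := (Finset.mem_sdiff.mp hB).1
          have h2 := (Finset.mem_sdiff.mp hB).2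
          rcases Finset.mem_union.mp (hU.subset h1) with h | h
          · exact absurd h h2
          · exact h
        have hne : U' ≠ TS p n 1 k' := by
          intro heq
          apply hU.2
          have : HS p n ∪ U' ⊆ U := Finset.union_subset hHSU Finset.sdiff_subset
          rwa [heq] at this
        exact Finset.ssubset_iff_subset_ne.mpr ⟨hsub1, hne⟩
      apply hTmin U' hU'ss
      intro a ha
      obtain ⟨B, hBU, haB⟩ := hUcov.2 a
      refine ⟨B, Finset.mem_sdiff.mpr ⟨hBU, ?_⟩, haB⟩
      intro hBH
      obtain ⟨j, rfl⟩ := mem_HS.mp hBH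
      exact hHSX j a haB ha

lemma zero_one_mem_Ms {k : ℕ} :
    (((0 : ZMod (p ^ (n - 1))), (1 : ZMod p)) : Am p n) ∈ Ms p n k :=
  mem_Ms.mpr ⟨0, by push_cast; ring⟩

lemma Ms_notMem_cover (hp : p.Prime) (hn : 2 ≤ n) {k1 k2 : ℕ} (hk1 : 1 ≤ k1)
    (hlt : k1 < k2) (hk2 : k2 ≤ n - 1) :
    Ms p n k1 ∉ HS p n ∪ TS p n 1 k2 := by
  haveI : Fact p.Prime := ⟨hp⟩
  have hp2 : 2 ≤ p := hp.two_le
  intro hmem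
  rcases Finset.mem_union.mp hmem with h | h
  · obtain ⟨j, heq⟩ := mem_HS.mp h
    exact zero_snd_notMem_Ls hp2 hn (by omega) one_ne_zero (heq ▸ zero_one_mem_Ms)
  · rcases mem_TS.mp h with ⟨i, t, hi1, hi2, ht, heq⟩ | heq
    · exact zero_snd_notMem_Ls hp2 hn (by omega) one_ne_zero (heq ▸ zero_one_mem_Ms)
    · have h1 : ((((p ^ k1 : ℕ) : ZMod (p ^ (n - 1))), (0 : ZMod p)) : Am p n) ∈ Ms p n k1 :=
        (wit_mem_Ms_iff hp2 (by omega) (by omega)).mpr (le_refl _)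
      rw [heq] at h1
      rw [wit_mem_Ms_iff hp2 (by omega) (by omega)] at h1
      omega

theorem countA (hp : p.Prime) (hn : 2 ≤ n) :
    Nat.card {S : Finset (AddSubgroup (Am p n)) // IsIrredCoverA p n S} = n - 1 := by
  haveI : NeZero p := ⟨hp.pos.ne'⟩
  classical
  set f : ℕ → Finset (AddSubgroup (Am p n)) := fun k' => HS p n ∪ TS p n 1 k' with hf
  have hMsmem : ∀ k', Ms p n k' ∈ f k' := fun k' =>
    Finset.mem_union_right _ (mem_TS.mpr (Or.inr rfl))
  have hinj : Set.InjOn f ↑(Finset.Icc 1 (n - 1)) := by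
    intro k1 hk1 k2 hk2 heq
    rw [Finset.coe_Icc, Set.mem_Icc] at hk1 hk2
    by_contra hne
    rcases lt_or_gt_of_ne hne with h | h
    · refine Ms_notMem_cover hp hn hk1.1 h hk2.2 ?_
      have h1 := hMsmem k1
      simp only [hf] at h1 heq
      rwa [heq] at h1
    · refine Ms_notMem_cover hp hn hk2.1 h hk1.2 ?_
      have h1 := hMsmem k2
      simp only [hf] at h1 heq
      rwa [← heq] at h1
  have hequiv : {S : Finset (AddSubgroup (Am p n)) // IsIrredCoverA p n S} ≃
      {S // S ∈ (Finset.Icc 1 (n - 1)).image f} := by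
    refine Equiv.subtypeEquivRight fun S => ?_
    rw [top_classification hp hn, Finset.mem_image]
    constructor
    · rintro ⟨k', h1, h2, rfl⟩
      exact ⟨k', Finset.mem_Icc.mpr ⟨h1, h2⟩, rfl⟩
    · rintro ⟨k', hk', rfl⟩
      rw [Finset.mem_Icc] at hk'
      exact ⟨k', hk'.1, hk'.2, rfl⟩
  rw [Nat.card_congr hequiv, Nat.card_eq_finsetCard,
    Finset.card_image_of_injOn hinj, Nat.card_Icc]
  omega


section Transfer

variable {p n : ℕ}

noncomputable def E : Finset (AddSubgroup (Am p n)) ≃ Finset (Subgroup (Multiplicative (Am p n))) :=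
  (AddSubgroup.toSubgroup (A := Am p n)).toEquiv.finsetCongr

lemma isCover_E (S : Finset (AddSubgroup (Am p n))) :
    IsCover (E S) ↔ IsCoverA p n S := by
  constructor
  · rintro ⟨h1, h2⟩
    constructor
    · intro B hBS hBtop
      refine h1 (AddSubgroup.toSubgroup B) ?_ ?_
      · rw [E, Equiv.finsetCongr_apply, Finset.mem_map_equiv]
        simpa using hBS
      · rw [hBtop]
        exact OrderIso.map_top _
    · intro a
      obtain ⟨H, hH, haH⟩ := h2 (Multiplicative.ofAdd a)
      rw [E, Equiv.finsetCongr_apply, Finset.mem_map_equiv] at hH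
      exact ⟨_, hH, haH⟩
  · rintro ⟨h1, h2⟩
    constructor
    · intro H hHE htop
      rw [E, Equiv.finsetCongr_apply, Finset.mem_map_equiv] at hHE
      apply h1 _ hHE
      rw [htop]
      exact OrderIso.map_top (AddSubgroup.toSubgroup (A := Am p n)).symm
    · intro g
      obtain ⟨B, hBS, hgB⟩ := h2 (Multiplicative.toAdd g)
      refine ⟨AddSubgroup.toSubgroup B, ?_, hgB⟩
      rw [E, Equiv.finsetCongr_apply, Finset.mem_map_equiv]
      simpa using hBS

lemma isIrred_E (S : Finset (AddSubgroup (Am p n))) :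
    IsIrredCoverA p n S ↔ IsIrredundantCover (E S) := by
  constructor
  · rintro ⟨hc, hm⟩
    refine ⟨(isCover_E S).mpr hc, ?_⟩
    intro T hT hTc
    have hss : E.symm T ⊂ S := by
      have : E (E.symm T) ⊂ E S := by rwa [Equiv.apply_symm_apply]
      rw [E, Equiv.finsetCongr_apply, Equiv.finsetCongr_apply] at this
      exact Finset.map_ssubset_map.mp this
    refine hm _ hss ((isCover_E _).mp ?_)
    rwa [Equiv.apply_symm_apply]
  · rintro ⟨hc, hm⟩
    refine ⟨(isCover_E S).mp hc, ?_⟩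
    intro T hT hTc
    have hss : E T ⊂ E S := by
      rw [E, Equiv.finsetCongr_apply, Equiv.finsetCongr_apply]
      exact Finset.map_ssubset_map.mpr hT
    exact hm _ hss ((isCover_E T).mpr hTc)

end Transfer

end Bcov

theorem stmt13 (p n : ℕ) (hp : p.Prime) (hn : 2 ≤ n) :
    beta (Multiplicative (ZMod (p ^ (n - 1)) × ZMod p)) = n - 1 := by
  haveI : NeZero p := ⟨hp.pos.ne'⟩
  have h := Bcov.countA (p := p) (n := n) hp hn
  have h2 : Nat.card {S : Finset (Subgroup (Multiplicative (Bcov.Am p n))) // IsIrredundantCover S}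
      = Nat.card {S : Finset (AddSubgroup (Bcov.Am p n)) // Bcov.IsIrredCoverA p n S} :=
    Nat.card_congr (Equiv.subtypeEquiv Bcov.E (fun S => Bcov.isIrred_E S)).symm
  exact h2.trans h
end

section
/- The group ℤ/4ℤ × ℤ/2ℤ has exactly two irredundant covers. -/
set_option synthInstance.maxSize 2000
set_option synthInstance.maxHeartbeats 2000000

namespace Stmt15Aux

abbrev G' := Multiplicative (ZMod 4 × ZMod 2)
def a : G' := Multiplicative.ofAdd ((1 : ZMod 4), (0 : ZMod 2))
def b : G' := Multiplicative.ofAdd ((0 : ZMod 4), (1 : ZMod 2))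

lemma cases8 : ∀ x : G', x = 1 ∨ x = a ∨ x = a*a ∨ x = a*(a*a) ∨ x = b ∨ x = a*b ∨
    x = a*(a*b) ∨ x = a*(a*(a*b)) := by decide

def mkSub (p : G' → Prop) [DecidablePred p] (h1 : p 1)
    (hm : ∀ x y : G', p x ∧ p y → p (x*y)) (hi : ∀ x : G', p x → p x⁻¹) : Subgroup G' where
  carrier := {x | p x}
  one_mem' := h1
  mul_mem' := fun hx hy => hm _ _ ⟨hx, hy⟩
  inv_mem' := fun hx => hi _ hx

def M1 : Subgroup G' := mkSub (fun x => x = 1 ∨ x = a ∨ x = a*a ∨ x = a*(a*a))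
  (by decide) (by beta_reduce; decide) (by beta_reduce; decide)
def M2 : Subgroup G' := mkSub (fun x => x = 1 ∨ x = a*b ∨ x = a*a ∨ x = a*(a*(a*b)))
  (by decide) (by beta_reduce; decide) (by beta_reduce; decide)
def M3 : Subgroup G' := mkSub (fun x => x = 1 ∨ x = a*a ∨ x = b ∨ x = a*(a*b))
  (by decide) (by beta_reduce; decide) (by beta_reduce; decide)
def K1 : Subgroup G' := mkSub (fun x => x = 1 ∨ x = b)
  (by decide) (by beta_reduce; decide) (by beta_reduce; decide)
def K2 : Subgroup G' := mkSub (fun x => x = 1 ∨ x = a*(a*b))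
  (by decide) (by beta_reduce; decide) (by beta_reduce; decide)

lemma mem_M1 (x : G') : x ∈ M1 ↔ (x = 1 ∨ x = a ∨ x = a*a ∨ x = a*(a*a)) := Iff.rfl
lemma mem_M2 (x : G') : x ∈ M2 ↔ (x = 1 ∨ x = a*b ∨ x = a*a ∨ x = a*(a*(a*b))) := Iff.rfl
lemma mem_M3 (x : G') : x ∈ M3 ↔ (x = 1 ∨ x = a*a ∨ x = b ∨ x = a*(a*b)) := Iff.rfl
lemma mem_K1 (x : G') : x ∈ K1 ↔ (x = 1 ∨ x = b) := Iff.rfl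
lemma mem_K2 (x : G') : x ∈ K2 ↔ (x = 1 ∨ x = a*(a*b)) := Iff.rfl

lemma memOf {H : Subgroup G'} {x y z : G'} (hx : x ∈ H) (hy : y ∈ H) (e : z = x*y) : z ∈ H :=
  e ▸ mul_mem hx hy
lemma memInv {H : Subgroup G'} {x z : G'} (hx : x ∈ H) (e : z = x⁻¹) : z ∈ H := e ▸ inv_mem hx

lemma top_of (H : Subgroup G') (ha : a ∈ H) (hb : b ∈ H) : H = ⊤ := by
  rw [Subgroup.eq_top_iff']
  intro x
  rcases cases8 x with h|h|h|h|h|h|h|h <;> subst h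
  exacts [one_mem H, ha, mul_mem ha ha, mul_mem ha (mul_mem ha ha), hb, mul_mem ha hb,
    mul_mem ha (mul_mem ha hb), mul_mem ha (mul_mem ha (mul_mem ha hb))]

lemma classify_a {H : Subgroup G'} (hne : H ≠ ⊤) (ha : a ∈ H) : H = M1 := by
  ext x; rw [mem_M1]
  constructor
  · intro hx
    rcases cases8 x with h|h|h|h|h|h|h|h
    · exact Or.inl h
    · exact Or.inr (Or.inl h)
    · exact Or.inr (Or.inr (Or.inl h))
    · exact Or.inr (Or.inr (Or.inr h))
    · subst h; exact absurd (top_of H ha hx) hne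
    · subst h; exact absurd (top_of H ha (memOf (inv_mem ha) hx (by decide))) hne
    · subst h; exact absurd (top_of H ha (memOf (inv_mem (mul_mem ha ha)) hx (by decide))) hne
    · subst h
      exact absurd (top_of H ha (memOf (inv_mem (mul_mem ha (mul_mem ha ha))) hx (by decide))) hne
  · rintro (h|h|h|h) <;> subst h
    exacts [one_mem H, ha, mul_mem ha ha, mul_mem ha (mul_mem ha ha)]

lemma classify_c {H : Subgroup G'} (hne : H ≠ ⊤) (hc : a*b ∈ H) : H = M2 := by
  ext x; rw [mem_M2]
  constructor
  · intro hx
    rcases cases8 x with h|h|h|h|h|h|h|h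
    · exact Or.inl h
    · subst h; exact absurd (top_of H hx (memOf (inv_mem hx) hc (by decide))) hne
    · exact Or.inr (Or.inr (Or.inl h))
    · subst h
      have ha : a ∈ H := memInv hx (by decide)
      exact absurd (top_of H ha (memOf (inv_mem ha) hc (by decide))) hne
    · subst h; exact absurd (top_of H (memOf hc (inv_mem hx) (by decide)) hx) hne
    · exact Or.inr (Or.inl h)
    · subst h
      have ha : a ∈ H := memOf hx (inv_mem hc) (by decide)
      exact absurd (top_of H ha (memOf (inv_mem ha) hc (by decide))) hne
    · exact Or.inr (Or.inr (Or.inr h))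
  · rintro (h|h|h|h) <;> subst h
    · exact one_mem H
    · exact hc
    · exact memOf hc hc (by decide)
    · exact memOf (memOf hc hc (by decide : a*a = (a*b)*(a*b))) hc (by decide)

lemma classify_b {H : Subgroup G'} (hne : H ≠ ⊤) (hb : b ∈ H) : H = K1 ∨ H = M3 := by
  by_cases h2m : a*a ∈ H
  · right
    ext x; rw [mem_M3]
    constructor
    · intro hx
      rcases cases8 x with h|h|h|h|h|h|h|h
      · exact Or.inl h
      · subst h; exact absurd (top_of H hx hb) hne
      · exact Or.inr (Or.inl h)
      · subst h; exact absurd (top_of H (memInv hx (by decide)) hb) hne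
      · exact Or.inr (Or.inr (Or.inl h))
      · subst h; exact absurd (top_of H (memOf hx (inv_mem hb) (by decide)) hb) hne
      · exact Or.inr (Or.inr (Or.inr h))
      · subst h
        have ha3 : a*(a*a) ∈ H := memOf hx (inv_mem hb) (by decide)
        exact absurd (top_of H (memInv ha3 (by decide)) hb) hne
    · rintro (h|h|h|h) <;> subst h
      exacts [one_mem H, h2m, hb, memOf h2m hb (by decide)]
  · left
    ext x; rw [mem_K1]
    constructor
    · intro hx
      rcases cases8 x with h|h|h|h|h|h|h|h
      · exact Or.inl h
      · subst h; exact absurd (mul_mem hx hx) h2m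
      · subst h; exact absurd hx h2m
      · subst h; exact absurd (memOf hx hx (by decide)) h2m
      · exact Or.inr h
      · subst h
        have ha : a ∈ H := memOf hx (inv_mem hb) (by decide)
        exact absurd (mul_mem ha ha) h2m
      · subst h; exact absurd (memOf hx (inv_mem hb) (by decide)) h2m
      · subst h
        have ha3 : a*(a*a) ∈ H := memOf hx (inv_mem hb) (by decide)
        exact absurd (memOf ha3 ha3 (by decide)) h2m
    · rintro (h|h) <;> subst h
      exacts [one_mem H, hb]

lemma classify_d {H : Subgroup G'} (hne : H ≠ ⊤) (hd : a*(a*b) ∈ H) : H = K2 ∨ H = M3 := by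
  by_cases hb : b ∈ H
  · rcases classify_b hne hb with hK | hM
    · exfalso
      have h2m : a*a ∈ H := memOf hd (inv_mem hb) (by decide)
      rw [hK, mem_K1] at h2m
      exact absurd h2m (by decide)
    · exact Or.inr hM
  · left
    ext x; rw [mem_K2]
    constructor
    · intro hx
      rcases cases8 x with h|h|h|h|h|h|h|h
      · exact Or.inl h
      · subst h; exact absurd (memOf (inv_mem (mul_mem hx hx)) hd (by decide)) hb
      · subst h; exact absurd (memOf (inv_mem hx) hd (by decide)) hb
      · subst h
        have h2 : a*a ∈ H := memOf hx hx (by decide)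
        exact absurd (memOf (inv_mem h2) hd (by decide)) hb
      · subst h; exact absurd hx hb
      · subst h
        have ha3 : a*(a*a) ∈ H := memOf hx hd (by decide)
        have h2 : a*a ∈ H := memOf ha3 ha3 (by decide)
        exact absurd (memOf (inv_mem h2) hd (by decide)) hb
      · exact Or.inr h
      · subst h
        have ha : a ∈ H := memOf hx hd (by decide)
        exact absurd (memOf (inv_mem (mul_mem ha ha)) hd (by decide)) hb
    · rintro (h|h) <;> subst h
      exacts [one_mem H, hd]

lemma ne_of_mem_notMem {H K : Subgroup G'} {x : G'} (hx : x ∈ H) (hnx : x ∉ K) : H ≠ K :=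
  fun h => hnx (h ▸ hx)

lemma M1_ne_top : M1 ≠ ⊤ := by
  intro h
  have hb : b ∈ M1 := h.symm ▸ Subgroup.mem_top b
  rw [mem_M1] at hb; exact absurd hb (by decide)
lemma M2_ne_top : M2 ≠ ⊤ := by
  intro h
  have hb : b ∈ M2 := h.symm ▸ Subgroup.mem_top b
  rw [mem_M2] at hb; exact absurd hb (by decide)
lemma M3_ne_top : M3 ≠ ⊤ := by
  intro h
  have ha : a ∈ M3 := h.symm ▸ Subgroup.mem_top a
  rw [mem_M3] at ha; exact absurd ha (by decide)
lemma K1_ne_top : K1 ≠ ⊤ := by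
  intro h
  have ha : a ∈ K1 := h.symm ▸ Subgroup.mem_top a
  rw [mem_K1] at ha; exact absurd ha (by decide)
lemma K2_ne_top : K2 ≠ ⊤ := by
  intro h
  have ha : a ∈ K2 := h.symm ▸ Subgroup.mem_top a
  rw [mem_K2] at ha; exact absurd ha (by decide)

lemma K1_ne_M1 : K1 ≠ M1 :=
  ne_of_mem_notMem ((mem_K1 b).mpr (by decide)) (fun h => absurd ((mem_M1 b).mp h) (by decide))
lemma K1_ne_M2 : K1 ≠ M2 :=
  ne_of_mem_notMem ((mem_K1 b).mpr (by decide)) (fun h => absurd ((mem_M2 b).mp h) (by decide))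
lemma K1_ne_M3 : K1 ≠ M3 :=
  (ne_of_mem_notMem ((mem_M3 (a*a)).mpr (by decide))
    (fun h => absurd ((mem_K1 (a*a)).mp h) (by decide))).symm
lemma M3_ne_M1 : M3 ≠ M1 :=
  ne_of_mem_notMem ((mem_M3 b).mpr (by decide)) (fun h => absurd ((mem_M1 b).mp h) (by decide))
lemma M3_ne_M2 : M3 ≠ M2 :=
  ne_of_mem_notMem ((mem_M3 b).mpr (by decide)) (fun h => absurd ((mem_M2 b).mp h) (by decide))
lemma M3_ne_K2 : M3 ≠ K2 :=
  ne_of_mem_notMem ((mem_M3 b).mpr (by decide)) (fun h => absurd ((mem_K2 b).mp h) (by decide))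
lemma K2_ne_M1 : K2 ≠ M1 :=
  ne_of_mem_notMem ((mem_K2 (a*(a*b))).mpr (by decide))
    (fun h => absurd ((mem_M1 (a*(a*b))).mp h) (by decide))
lemma K2_ne_M2 : K2 ≠ M2 :=
  ne_of_mem_notMem ((mem_K2 (a*(a*b))).mpr (by decide))
    (fun h => absurd ((mem_M2 (a*(a*b))).mp h) (by decide))
lemma K2_ne_K1 : K2 ≠ K1 :=
  ne_of_mem_notMem ((mem_K2 (a*(a*b))).mpr (by decide))
    (fun h => absurd ((mem_K1 (a*(a*b))).mp h) (by decide))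

open Classical in
noncomputable def S1 : Finset (Subgroup G') := {M1, M2, M3}
open Classical in
noncomputable def S2 : Finset (Subgroup G') := {M1, M2, K1, K2}

lemma mem_S1 (H : Subgroup G') : H ∈ S1 ↔ H = M1 ∨ H = M2 ∨ H = M3 := by
  simp [S1]
lemma mem_S2 (H : Subgroup G') : H ∈ S2 ↔ H = M1 ∨ H = M2 ∨ H = K1 ∨ H = K2 := by
  simp [S2]

lemma coverS1 : IsCover S1 := by
  constructor
  · intro H hH
    rcases (mem_S1 H).mp hH with rfl|rfl|rfl
    exacts [M1_ne_top, M2_ne_top, M3_ne_top]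
  · intro g
    rcases cases8 g with h|h|h|h|h|h|h|h <;> subst h
    · exact ⟨M1, (mem_S1 M1).mpr (Or.inl rfl), (mem_M1 1).mpr (by decide)⟩
    · exact ⟨M1, (mem_S1 M1).mpr (Or.inl rfl), (mem_M1 a).mpr (by decide)⟩
    · exact ⟨M1, (mem_S1 M1).mpr (Or.inl rfl), (mem_M1 (a*a)).mpr (by decide)⟩
    · exact ⟨M1, (mem_S1 M1).mpr (Or.inl rfl), (mem_M1 (a*(a*a))).mpr (by decide)⟩
    · exact ⟨M3, (mem_S1 M3).mpr (Or.inr (Or.inr rfl)), (mem_M3 b).mpr (by decide)⟩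
    · exact ⟨M2, (mem_S1 M2).mpr (Or.inr (Or.inl rfl)), (mem_M2 (a*b)).mpr (by decide)⟩
    · exact ⟨M3, (mem_S1 M3).mpr (Or.inr (Or.inr rfl)), (mem_M3 (a*(a*b))).mpr (by decide)⟩
    · exact ⟨M2, (mem_S1 M2).mpr (Or.inr (Or.inl rfl)), (mem_M2 (a*(a*(a*b)))).mpr (by decide)⟩

lemma coverS2 : IsCover S2 := by
  constructor
  · intro H hH
    rcases (mem_S2 H).mp hH with rfl|rfl|rfl|rfl
    exacts [M1_ne_top, M2_ne_top, K1_ne_top, K2_ne_top]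
  · intro g
    rcases cases8 g with h|h|h|h|h|h|h|h <;> subst h
    · exact ⟨M1, (mem_S2 M1).mpr (Or.inl rfl), (mem_M1 1).mpr (by decide)⟩
    · exact ⟨M1, (mem_S2 M1).mpr (Or.inl rfl), (mem_M1 a).mpr (by decide)⟩
    · exact ⟨M1, (mem_S2 M1).mpr (Or.inl rfl), (mem_M1 (a*a)).mpr (by decide)⟩
    · exact ⟨M1, (mem_S2 M1).mpr (Or.inl rfl), (mem_M1 (a*(a*a))).mpr (by decide)⟩
    · exact ⟨K1, (mem_S2 K1).mpr (Or.inr (Or.inr (Or.inl rfl))), (mem_K1 b).mpr (by decide)⟩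
    · exact ⟨M2, (mem_S2 M2).mpr (Or.inr (Or.inl rfl)), (mem_M2 (a*b)).mpr (by decide)⟩
    · exact ⟨K2, (mem_S2 K2).mpr (Or.inr (Or.inr (Or.inr rfl))), (mem_K2 (a*(a*b))).mpr (by decide)⟩
    · exact ⟨M2, (mem_S2 M2).mpr (Or.inr (Or.inl rfl)), (mem_M2 (a*(a*(a*b)))).mpr (by decide)⟩

lemma irredS1 : IsIrredundantCover S1 := by
  refine ⟨coverS1, ?_⟩
  intro T hT hcovT
  obtain ⟨X, hXS1, hXT⟩ := Finset.exists_of_ssubset hT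
  have hTsub := hT.subset
  rcases (mem_S1 X).mp hXS1 with rfl|rfl|rfl
  · obtain ⟨H, hHT, ha⟩ := hcovT.2 a
    have := classify_a (hcovT.1 H hHT) ha
    exact hXT (this ▸ hHT)
  · obtain ⟨H, hHT, hc⟩ := hcovT.2 (a*b)
    have := classify_c (hcovT.1 H hHT) hc
    exact hXT (this ▸ hHT)
  · obtain ⟨H, hHT, hb⟩ := hcovT.2 b
    rcases classify_b (hcovT.1 H hHT) hb with rfl | rfl
    · rcases (mem_S1 K1).mp (hTsub hHT) with h|h|h
      exacts [absurd h K1_ne_M1, absurd h K1_ne_M2, absurd h K1_ne_M3]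
    · exact hXT hHT

lemma irredS2 : IsIrredundantCover S2 := by
  refine ⟨coverS2, ?_⟩
  intro T hT hcovT
  obtain ⟨X, hXS2, hXT⟩ := Finset.exists_of_ssubset hT
  have hTsub := hT.subset
  rcases (mem_S2 X).mp hXS2 with rfl|rfl|rfl|rfl
  · obtain ⟨H, hHT, ha⟩ := hcovT.2 a
    have := classify_a (hcovT.1 H hHT) ha
    exact hXT (this ▸ hHT)
  · obtain ⟨H, hHT, hc⟩ := hcovT.2 (a*b)
    have := classify_c (hcovT.1 H hHT) hc
    exact hXT (this ▸ hHT)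
  · obtain ⟨H, hHT, hb⟩ := hcovT.2 b
    rcases classify_b (hcovT.1 H hHT) hb with rfl | rfl
    · exact hXT hHT
    · rcases (mem_S2 M3).mp (hTsub hHT) with h|h|h|h
      exacts [absurd h M3_ne_M1, absurd h M3_ne_M2, absurd h K1_ne_M3.symm, absurd h M3_ne_K2]
  · obtain ⟨H, hHT, hd⟩ := hcovT.2 (a*(a*b))
    rcases classify_d (hcovT.1 H hHT) hd with rfl | rfl
    · exact hXT hHT
    · rcases (mem_S2 M3).mp (hTsub hHT) with h|h|h|h
      exacts [absurd h M3_ne_M1, absurd h M3_ne_M2, absurd h K1_ne_M3.symm, absurd h M3_ne_K2]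

lemma eq_of_cover_subset {C S : Finset (Subgroup G')} (hC : IsCover C) (hsub : C ⊆ S)
    (hirr : ∀ T : Finset (Subgroup G'), T ⊂ S → ¬ IsCover T) : S = C := by
  by_cases h : C = S
  · exact h.symm
  · exact absurd hC (hirr C (Finset.ssubset_iff_subset_ne.mpr ⟨hsub, h⟩))

lemma charac (S : Finset (Subgroup G')) : IsIrredundantCover S ↔ S = S1 ∨ S = S2 := by
  constructor
  · rintro ⟨⟨hproper, hcov⟩, hirr⟩
    obtain ⟨Ha, hHaS, ha⟩ := hcov a
    obtain rfl := classify_a (hproper _ hHaS) ha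
    obtain ⟨Hc, hHcS, hc⟩ := hcov (a*b)
    obtain rfl := classify_c (hproper _ hHcS) hc
    obtain ⟨Hb, hHbS, hb⟩ := hcov b
    obtain ⟨Hd, hHdS, hd⟩ := hcov (a*(a*b))
    rcases classify_b (hproper _ hHbS) hb with rfl | rfl
    · rcases classify_d (hproper _ hHdS) hd with rfl | rfl
      · right
        refine eq_of_cover_subset coverS2 ?_ hirr
        intro H hH
        rcases (mem_S2 H).mp hH with rfl|rfl|rfl|rfl
        exacts [hHaS, hHcS, hHbS, hHdS]
      · left
        refine eq_of_cover_subset coverS1 ?_ hirr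
        intro H hH
        rcases (mem_S1 H).mp hH with rfl|rfl|rfl
        exacts [hHaS, hHcS, hHdS]
    · left
      refine eq_of_cover_subset coverS1 ?_ hirr
      intro H hH
      rcases (mem_S1 H).mp hH with rfl|rfl|rfl
      exacts [hHaS, hHcS, hHbS]
  · rintro (rfl | rfl)
    exacts [irredS1, irredS2]

lemma S1_ne_S2 : S1 ≠ S2 := by
  intro h
  have hM3 : M3 ∈ S1 := (mem_S1 M3).mpr (Or.inr (Or.inr rfl))
  rw [h] at hM3
  rcases (mem_S2 M3).mp hM3 with h'|h'|h'|h'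
  exacts [absurd h' M3_ne_M1, absurd h' M3_ne_M2, absurd h' K1_ne_M3.symm, absurd h' M3_ne_K2]

end Stmt15Aux

theorem stmt15 : beta (Multiplicative (ZMod 4 × ZMod 2)) = 2 := by
  open Stmt15Aux in
  show Nat.card {S : Finset (Subgroup G') // IsIrredundantCover S} = 2
  have hset : {S : Finset (Subgroup Stmt15Aux.G') | IsIrredundantCover S} =
      {Stmt15Aux.S1, Stmt15Aux.S2} := by
    ext S
    rw [Set.mem_insert_iff, Set.mem_singleton_iff, Set.mem_setOf_eq]
    exact Stmt15Aux.charac S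
  calc Nat.card {S : Finset (Subgroup Stmt15Aux.G') // IsIrredundantCover S}
      = Nat.card ({S : Finset (Subgroup Stmt15Aux.G') | IsIrredundantCover S} :
        Set (Finset (Subgroup Stmt15Aux.G'))) := rfl
    _ = Nat.card (({Stmt15Aux.S1, Stmt15Aux.S2} : Set (Finset (Subgroup Stmt15Aux.G')))) := by
        rw [hset]
    _ = 2 := by
        rw [Nat.card_coe_set_eq, Set.ncard_pair Stmt15Aux.S1_ne_S2]
end

section
/- The dihedral group D_8 of order 8 has exactly four irredundant covers. -/
namespace Stmt16
open DihedralGroup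

abbrev G := DihedralGroup 4

def sg (F : Finset G) (h : (1:G) ∈ F ∧ (∀ a ∈ F, ∀ b ∈ F, a*b ∈ F) ∧ ∀ a ∈ F, a⁻¹ ∈ F) :
    Subgroup G where
  carrier := ↑F
  one_mem' := h.1
  mul_mem' := fun ha hb => h.2.1 _ ha _ hb
  inv_mem' := fun ha => h.2.2 _ ha

lemma mem_sg {F h g} : g ∈ sg F h ↔ g ∈ F := Iff.rfl

instance {F h} (g : G) : Decidable (g ∈ sg F h) := decidable_of_iff (g ∈ F) Iff.rfl

lemma sg_inj {F F' h h'} : sg F h = sg F' h' ↔ F = F' := by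
  constructor
  · intro he
    ext x
    rw [← mem_sg (h := h), he, mem_sg]
  · rintro rfl; rfl

abbrev Hbot : Subgroup G := sg {r 0} (by decide)
abbrev Hz : Subgroup G := sg {r 0, r 2} (by decide)
abbrev Hb0 : Subgroup G := sg {r 0, sr 0} (by decide)
abbrev Hb1 : Subgroup G := sg {r 0, sr 1} (by decide)
abbrev Hb2 : Subgroup G := sg {r 0, sr 2} (by decide)
abbrev Hb3 : Subgroup G := sg {r 0, sr 3} (by decide)
abbrev Hr : Subgroup G := sg {r 0, r 1, r 2, r 3} (by decide)
abbrev HV1 : Subgroup G := sg {r 0, r 2, sr 0, sr 2} (by decide)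
abbrev HV2 : Subgroup G := sg {r 0, r 2, sr 1, sr 3} (by decide)

lemma memc {H : Subgroup G} {a b c : G} (e : a * b = c) (ha : a ∈ H) (hb : b ∈ H) : c ∈ H :=
  e ▸ H.mul_mem ha hb

lemma top_of (H : Subgroup G) (h1 : (r 1 : G) ∈ H) (i : ZMod 4) (hs : sr i ∈ H) : H = ⊤ := by
  have h0 : (r 0 : G) ∈ H := H.one_mem
  have h2 : (r 2 : G) ∈ H := memc (by decide) h1 h1
  have h3 : (r 3 : G) ∈ H := memc (by decide) h1 h2
  have hrj : ∀ j : ZMod 4, (r j : G) ∈ H := by intro j; fin_cases j <;> assumption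
  have hsj : ∀ j : ZMod 4, (sr j : G) ∈ H := by
    intro j
    have e : (sr i * r (j - i) : G) = sr j := by rw [sr_mul_r]; ring_nf
    exact e ▸ H.mul_mem hs (hrj _)
  rw [Subgroup.eq_top_iff']
  rintro (j | j)
  exacts [hrj j, hsj j]

lemma classify (H : Subgroup G) :
    H = Hbot ∨ H = Hz ∨ H = Hb0 ∨ H = Hb1 ∨ H = Hb2 ∨ H = Hb3 ∨ H = Hr ∨ H = HV1 ∨ H = HV2
      ∨ H = ⊤ := by
  have h0 : (r 0 : G) ∈ H := H.one_mem
  by_cases h1 : (r 1 : G) ∈ H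
  · by_cases hs0 : (sr 0 : G) ∈ H
    · exact Or.inr <| Or.inr <| Or.inr <| Or.inr <| Or.inr <| Or.inr <| Or.inr <| Or.inr <|
        Or.inr (top_of H h1 0 hs0)
    · by_cases hs1 : (sr 1 : G) ∈ H
      · exact Or.inr <| Or.inr <| Or.inr <| Or.inr <| Or.inr <| Or.inr <| Or.inr <| Or.inr <|
          Or.inr (top_of H h1 1 hs1)
      · by_cases hs2 : (sr 2 : G) ∈ H
        · exact Or.inr <| Or.inr <| Or.inr <| Or.inr <| Or.inr <| Or.inr <| Or.inr <| Or.inr <|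
            Or.inr (top_of H h1 2 hs2)
        · by_cases hs3 : (sr 3 : G) ∈ H
          · exact Or.inr <| Or.inr <| Or.inr <| Or.inr <| Or.inr <| Or.inr <| Or.inr <| Or.inr <|
              Or.inr (top_of H h1 3 hs3)
          · -- H = Hr
            have h2 : (r 2 : G) ∈ H := memc (by decide) h1 h1
            have h3 : (r 3 : G) ∈ H := memc (by decide) h1 h2
            refine Or.inr <| Or.inr <| Or.inr <| Or.inr <| Or.inr <| Or.inr <| Or.inl ?_
            ext g
            fin_cases g <;>
              first
                | exact iff_of_true (by assumption) (by decide)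
                | exact iff_of_false (by assumption) (by decide)
  · have h3 : (r 3 : G) ∉ H := fun h => h1 ((by decide : ((r 3)⁻¹ : G) = r 1) ▸ H.inv_mem h)
    by_cases h2 : (r 2 : G) ∈ H
    · by_cases hs0 : (sr 0 : G) ∈ H
      · have hs2 : (sr 2 : G) ∈ H := memc (by decide) hs0 h2
        by_cases hs1 : (sr 1 : G) ∈ H
        · exact absurd (memc (by decide : (sr 0 * sr 1 : G) = r 1) hs0 hs1) h1
        · have hs3 : (sr 3 : G) ∉ H := fun h => hs1 (memc (by decide) h h2)
          refine Or.inr <| Or.inr <| Or.inr <| Or.inr <| Or.inr <| Or.inr <| Or.inr <| Or.inl ?_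
          ext g
          fin_cases g <;>
            first
              | exact iff_of_true (by assumption) (by decide)
              | exact iff_of_false (by assumption) (by decide)
      · have hs2 : (sr 2 : G) ∉ H := fun h => hs0 (memc (by decide) h h2)
        by_cases hs1 : (sr 1 : G) ∈ H
        · have hs3 : (sr 3 : G) ∈ H := memc (by decide) hs1 h2
          refine Or.inr <| Or.inr <| Or.inr <| Or.inr <| Or.inr <| Or.inr <| Or.inr <| Or.inr <|
            Or.inl ?_
          ext g
          fin_cases g <;>
            first
              | exact iff_of_true (by assumption) (by decide)
              | exact iff_of_false (by assumption) (by decide)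
        · have hs3 : (sr 3 : G) ∉ H := fun h => hs1 (memc (by decide) h h2)
          refine Or.inr <| Or.inl ?_
          ext g
          fin_cases g <;>
            first
              | exact iff_of_true (by assumption) (by decide)
              | exact iff_of_false (by assumption) (by decide)
    · by_cases hs0 : (sr 0 : G) ∈ H
      · have hs1 : (sr 1 : G) ∉ H := fun h => h1 (memc (by decide) hs0 h)
        have hs2 : (sr 2 : G) ∉ H := fun h => h2 (memc (by decide) hs0 h)
        have hs3 : (sr 3 : G) ∉ H := fun h => h3 (memc (by decide) hs0 h)
        refine Or.inr <| Or.inr <| Or.inl ?_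
        ext g
        fin_cases g <;>
          first
            | exact iff_of_true (by assumption) (by decide)
            | exact iff_of_false (by assumption) (by decide)
      · by_cases hs1 : (sr 1 : G) ∈ H
        · have hs2 : (sr 2 : G) ∉ H := fun h => h1 (memc (by decide) hs1 h)
          have hs3 : (sr 3 : G) ∉ H := fun h => h2 (memc (by decide) hs1 h)
          refine Or.inr <| Or.inr <| Or.inr <| Or.inl ?_
          ext g
          fin_cases g <;>
            first
              | exact iff_of_true (by assumption) (by decide)
              | exact iff_of_false (by assumption) (by decide)
        · by_cases hs2 : (sr 2 : G) ∈ H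
          · have hs3 : (sr 3 : G) ∉ H := fun h => h1 (memc (by decide) hs2 h)
            refine Or.inr <| Or.inr <| Or.inr <| Or.inr <| Or.inl ?_
            ext g
            fin_cases g <;>
              first
                | exact iff_of_true (by assumption) (by decide)
                | exact iff_of_false (by assumption) (by decide)
          · by_cases hs3 : (sr 3 : G) ∈ H
            · refine Or.inr <| Or.inr <| Or.inr <| Or.inr <| Or.inr <| Or.inl ?_
              ext g
              fin_cases g <;>
                first
                  | exact iff_of_true (by assumption) (by decide)
                  | exact iff_of_false (by assumption) (by decide)
            · refine Or.inl ?_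
              ext g
              fin_cases g <;>
                first
                  | exact iff_of_true (by assumption) (by decide)
                  | exact iff_of_false (by assumption) (by decide)


noncomputable instance : DecidableEq (Subgroup G) := Classical.decEq _

noncomputable def S1 : Finset (Subgroup G) := {Hr, HV1, HV2}
noncomputable def S2 : Finset (Subgroup G) := {Hr, HV1, Hb1, Hb3}
noncomputable def S3 : Finset (Subgroup G) := {Hr, HV2, Hb0, Hb2}
noncomputable def S4 : Finset (Subgroup G) := {Hr, Hb0, Hb1, Hb2, Hb3}

lemma sg_ne_top {F h} (x : G) (hx : x ∉ F) : sg F h ≠ ⊤ := by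
  intro e
  exact hx (mem_sg.1 (e ▸ Subgroup.mem_top x : x ∈ sg F h))

lemma sg_le {F F' h h'} (hle : ∀ x : G, x ∈ F → x ∈ F') : sg F h ≤ sg F' h' :=
  fun x hx => hle x hx

lemma cover_S1 : IsCover S1 := by
  constructor
  · intro H hH
    simp only [S1, Finset.mem_insert, Finset.mem_singleton] at hH
    rcases hH with rfl | rfl | rfl
    · exact sg_ne_top (sr 0) (by decide)
    · exact sg_ne_top (r 1) (by decide)
    · exact sg_ne_top (r 1) (by decide)
  · intro g
    have m1 : Hr ∈ S1 := by simp [S1]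
    have m2 : HV1 ∈ S1 := by simp [S1]
    have m3 : HV2 ∈ S1 := by simp [S1]
    fin_cases g
    · exact ⟨Hr, m1, by decide⟩
    · exact ⟨Hr, m1, by decide⟩
    · exact ⟨Hr, m1, by decide⟩
    · exact ⟨Hr, m1, by decide⟩
    · exact ⟨HV1, m2, by decide⟩
    · exact ⟨HV2, m3, by decide⟩
    · exact ⟨HV1, m2, by decide⟩
    · exact ⟨HV2, m3, by decide⟩

lemma cover_S2 : IsCover S2 := by
  constructor
  · intro H hH
    simp only [S2, Finset.mem_insert, Finset.mem_singleton] at hH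
    rcases hH with rfl | rfl | rfl | rfl
    · exact sg_ne_top (sr 0) (by decide)
    · exact sg_ne_top (r 1) (by decide)
    · exact sg_ne_top (r 1) (by decide)
    · exact sg_ne_top (r 1) (by decide)
  · intro g
    have m1 : Hr ∈ S2 := by simp [S2]
    have m2 : HV1 ∈ S2 := by simp [S2]
    have m3 : Hb1 ∈ S2 := by simp [S2]
    have m4 : Hb3 ∈ S2 := by simp [S2]
    fin_cases g
    · exact ⟨Hr, m1, by decide⟩
    · exact ⟨Hr, m1, by decide⟩
    · exact ⟨Hr, m1, by decide⟩
    · exact ⟨Hr, m1, by decide⟩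
    · exact ⟨HV1, m2, by decide⟩
    · exact ⟨Hb1, m3, by decide⟩
    · exact ⟨HV1, m2, by decide⟩
    · exact ⟨Hb3, m4, by decide⟩

lemma cover_S3 : IsCover S3 := by
  constructor
  · intro H hH
    simp only [S3, Finset.mem_insert, Finset.mem_singleton] at hH
    rcases hH with rfl | rfl | rfl | rfl
    · exact sg_ne_top (sr 0) (by decide)
    · exact sg_ne_top (r 1) (by decide)
    · exact sg_ne_top (r 1) (by decide)
    · exact sg_ne_top (r 1) (by decide)
  · intro g
    have m1 : Hr ∈ S3 := by simp [S3]
    have m2 : HV2 ∈ S3 := by simp [S3]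
    have m3 : Hb0 ∈ S3 := by simp [S3]
    have m4 : Hb2 ∈ S3 := by simp [S3]
    fin_cases g
    · exact ⟨Hr, m1, by decide⟩
    · exact ⟨Hr, m1, by decide⟩
    · exact ⟨Hr, m1, by decide⟩
    · exact ⟨Hr, m1, by decide⟩
    · exact ⟨Hb0, m3, by decide⟩
    · exact ⟨HV2, m2, by decide⟩
    · exact ⟨Hb2, m4, by decide⟩
    · exact ⟨HV2, m2, by decide⟩

lemma cover_S4 : IsCover S4 := by
  constructor
  · intro H hH
    simp only [S4, Finset.mem_insert, Finset.mem_singleton] at hH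
    rcases hH with rfl | rfl | rfl | rfl | rfl
    · exact sg_ne_top (sr 0) (by decide)
    · exact sg_ne_top (r 1) (by decide)
    · exact sg_ne_top (r 1) (by decide)
    · exact sg_ne_top (r 1) (by decide)
    · exact sg_ne_top (r 1) (by decide)
  · intro g
    have m1 : Hr ∈ S4 := by simp [S4]
    have m2 : Hb0 ∈ S4 := by simp [S4]
    have m3 : Hb1 ∈ S4 := by simp [S4]
    have m4 : Hb2 ∈ S4 := by simp [S4]
    have m5 : Hb3 ∈ S4 := by simp [S4]
    fin_cases g
    · exact ⟨Hr, m1, by decide⟩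
    · exact ⟨Hr, m1, by decide⟩
    · exact ⟨Hr, m1, by decide⟩
    · exact ⟨Hr, m1, by decide⟩
    · exact ⟨Hb0, m2, by decide⟩
    · exact ⟨Hb1, m3, by decide⟩
    · exact ⟨Hb2, m4, by decide⟩
    · exact ⟨Hb3, m5, by decide⟩

lemma irr_aux {S : Finset (Subgroup G)} {T : Finset (Subgroup G)} (hT : T ⊂ S)
    (hcov : IsCover T) (a : Subgroup G) (haS : a ∈ S) (haT : a ∉ T) (w : G)
    (huniq : ∀ H ∈ S, w ∈ H → H = a) : False := by
  obtain ⟨H, hHT, hgH⟩ := hcov.2 w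
  exact haT ((huniq H (hT.subset hHT) hgH) ▸ hHT)

lemma irred_S1 : IsIrredundantCover S1 := by
  refine ⟨cover_S1, fun T hT hcov => ?_⟩
  obtain ⟨a, haS, haT⟩ := Finset.exists_of_ssubset hT
  have haS' := haS
  simp only [S1, Finset.mem_insert, Finset.mem_singleton] at haS'
  rcases haS' with rfl | rfl | rfl
  · refine irr_aux hT hcov _ haS haT (r 1) (fun H hH hw => ?_)
    simp only [S1, Finset.mem_insert, Finset.mem_singleton] at hH
    rcases hH with rfl | rfl | rfl
    · rfl
    · exact absurd hw (by decide)
    · exact absurd hw (by decide)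
  · refine irr_aux hT hcov _ haS haT (sr 0) (fun H hH hw => ?_)
    simp only [S1, Finset.mem_insert, Finset.mem_singleton] at hH
    rcases hH with rfl | rfl | rfl
    · exact absurd hw (by decide)
    · rfl
    · exact absurd hw (by decide)
  · refine irr_aux hT hcov _ haS haT (sr 1) (fun H hH hw => ?_)
    simp only [S1, Finset.mem_insert, Finset.mem_singleton] at hH
    rcases hH with rfl | rfl | rfl
    · exact absurd hw (by decide)
    · exact absurd hw (by decide)
    · rfl

lemma irred_S2 : IsIrredundantCover S2 := by
  refine ⟨cover_S2, fun T hT hcov => ?_⟩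
  obtain ⟨a, haS, haT⟩ := Finset.exists_of_ssubset hT
  have haS' := haS
  simp only [S2, Finset.mem_insert, Finset.mem_singleton] at haS'
  rcases haS' with rfl | rfl | rfl | rfl
  · refine irr_aux hT hcov _ haS haT (r 1) (fun H hH hw => ?_)
    simp only [S2, Finset.mem_insert, Finset.mem_singleton] at hH
    rcases hH with rfl | rfl | rfl | rfl
    · rfl
    all_goals exact absurd hw (by decide)
  · refine irr_aux hT hcov _ haS haT (sr 0) (fun H hH hw => ?_)
    simp only [S2, Finset.mem_insert, Finset.mem_singleton] at hH
    rcases hH with rfl | rfl | rfl | rfl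
    · exact absurd hw (by decide)
    · rfl
    all_goals exact absurd hw (by decide)
  · refine irr_aux hT hcov _ haS haT (sr 1) (fun H hH hw => ?_)
    simp only [S2, Finset.mem_insert, Finset.mem_singleton] at hH
    rcases hH with rfl | rfl | rfl | rfl
    · exact absurd hw (by decide)
    · exact absurd hw (by decide)
    · rfl
    · exact absurd hw (by decide)
  · refine irr_aux hT hcov _ haS haT (sr 3) (fun H hH hw => ?_)
    simp only [S2, Finset.mem_insert, Finset.mem_singleton] at hH
    rcases hH with rfl | rfl | rfl | rfl
    · exact absurd hw (by decide)
    · exact absurd hw (by decide)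
    · exact absurd hw (by decide)
    · rfl

lemma irred_S3 : IsIrredundantCover S3 := by
  refine ⟨cover_S3, fun T hT hcov => ?_⟩
  obtain ⟨a, haS, haT⟩ := Finset.exists_of_ssubset hT
  have haS' := haS
  simp only [S3, Finset.mem_insert, Finset.mem_singleton] at haS'
  rcases haS' with rfl | rfl | rfl | rfl
  · refine irr_aux hT hcov _ haS haT (r 1) (fun H hH hw => ?_)
    simp only [S3, Finset.mem_insert, Finset.mem_singleton] at hH
    rcases hH with rfl | rfl | rfl | rfl
    · rfl
    all_goals exact absurd hw (by decide)
  · refine irr_aux hT hcov _ haS haT (sr 1) (fun H hH hw => ?_)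
    simp only [S3, Finset.mem_insert, Finset.mem_singleton] at hH
    rcases hH with rfl | rfl | rfl | rfl
    · exact absurd hw (by decide)
    · rfl
    all_goals exact absurd hw (by decide)
  · refine irr_aux hT hcov _ haS haT (sr 0) (fun H hH hw => ?_)
    simp only [S3, Finset.mem_insert, Finset.mem_singleton] at hH
    rcases hH with rfl | rfl | rfl | rfl
    · exact absurd hw (by decide)
    · exact absurd hw (by decide)
    · rfl
    · exact absurd hw (by decide)
  · refine irr_aux hT hcov _ haS haT (sr 2) (fun H hH hw => ?_)
    simp only [S3, Finset.mem_insert, Finset.mem_singleton] at hH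
    rcases hH with rfl | rfl | rfl | rfl
    · exact absurd hw (by decide)
    · exact absurd hw (by decide)
    · exact absurd hw (by decide)
    · rfl

lemma irred_S4 : IsIrredundantCover S4 := by
  refine ⟨cover_S4, fun T hT hcov => ?_⟩
  obtain ⟨a, haS, haT⟩ := Finset.exists_of_ssubset hT
  have haS' := haS
  simp only [S4, Finset.mem_insert, Finset.mem_singleton] at haS'
  rcases haS' with rfl | rfl | rfl | rfl | rfl
  · refine irr_aux hT hcov _ haS haT (r 1) (fun H hH hw => ?_)
    simp only [S4, Finset.mem_insert, Finset.mem_singleton] at hH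
    rcases hH with rfl | rfl | rfl | rfl | rfl
    · rfl
    all_goals exact absurd hw (by decide)
  · refine irr_aux hT hcov _ haS haT (sr 0) (fun H hH hw => ?_)
    simp only [S4, Finset.mem_insert, Finset.mem_singleton] at hH
    rcases hH with rfl | rfl | rfl | rfl | rfl
    · exact absurd hw (by decide)
    · rfl
    all_goals exact absurd hw (by decide)
  · refine irr_aux hT hcov _ haS haT (sr 1) (fun H hH hw => ?_)
    simp only [S4, Finset.mem_insert, Finset.mem_singleton] at hH
    rcases hH with rfl | rfl | rfl | rfl | rfl
    · exact absurd hw (by decide)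
    · exact absurd hw (by decide)
    · rfl
    all_goals exact absurd hw (by decide)
  · refine irr_aux hT hcov _ haS haT (sr 2) (fun H hH hw => ?_)
    simp only [S4, Finset.mem_insert, Finset.mem_singleton] at hH
    rcases hH with rfl | rfl | rfl | rfl | rfl
    · exact absurd hw (by decide)
    · exact absurd hw (by decide)
    · exact absurd hw (by decide)
    · rfl
    · exact absurd hw (by decide)
  · refine irr_aux hT hcov _ haS haT (sr 3) (fun H hH hw => ?_)
    simp only [S4, Finset.mem_insert, Finset.mem_singleton] at hH
    rcases hH with rfl | rfl | rfl | rfl | rfl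
    · exact absurd hw (by decide)
    · exact absurd hw (by decide)
    · exact absurd hw (by decide)
    · exact absurd hw (by decide)
    · rfl

lemma erase_redundant {S : Finset (Subgroup G)} (hS : IsIrredundantCover S) {A B : Subgroup G}
    (hA : A ∈ S) (hB : B ∈ S) (hle : B ≤ A) (hne : B ≠ A) : False := by
  apply hS.2 (S.erase B) (Finset.erase_ssubset hB)
  refine ⟨fun H hH => hS.1.1 H (Finset.mem_of_mem_erase hH), fun g => ?_⟩
  obtain ⟨H, hH, hg⟩ := hS.1.2 g
  by_cases h : H = B
  · exact ⟨A, Finset.mem_erase.2 ⟨fun e => hne e.symm, hA⟩, hle (h ▸ hg)⟩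
  · exact ⟨H, Finset.mem_erase.2 ⟨h, hH⟩, hg⟩

lemma sg_ne {F F' h h'} (hne : F ≠ F') : sg F h ≠ sg F' h' := fun e => hne (sg_inj.1 e)

lemma hr_mem {S : Finset (Subgroup G)} (hS : IsIrredundantCover S) : Hr ∈ S := by
  obtain ⟨H, hH, hg⟩ := hS.1.2 (r 1)
  rcases classify H with rfl|rfl|rfl|rfl|rfl|rfl|rfl|rfl|rfl|rfl <;>
    first
      | exact absurd hg (by decide)
      | exact hH
      | exact absurd rfl (hS.1.1 _ hH)

lemma refl_mem {S : Finset (Subgroup G)} (hS : IsIrredundantCover S) (i : ZMod 4)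
    (B V : Subgroup G) (hcl : ∀ H : Subgroup G, (sr i : G) ∈ H → H = B ∨ H = V ∨ H = ⊤) :
    B ∈ S ∨ V ∈ S := by
  obtain ⟨H, hH, hg⟩ := hS.1.2 (sr i)
  rcases hcl H hg with rfl | rfl | rfl
  · exact Or.inl hH
  · exact Or.inr hH
  · exact absurd rfl (hS.1.1 _ hH)

set_option maxHeartbeats 2000000 in
lemma irred_eq {S : Finset (Subgroup G)} (hS : IsIrredundantCover S) :
    S = S1 ∨ S = S2 ∨ S = S3 ∨ S = S4 := by
  have hHr : Hr ∈ S := hr_mem hS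
  have h0 : Hb0 ∈ S ∨ HV1 ∈ S := by
    refine refl_mem hS 0 _ _ (fun H hg => ?_)
    rcases classify H with rfl|rfl|rfl|rfl|rfl|rfl|rfl|rfl|rfl|rfl <;>
      first
        | exact absurd hg (by decide)
        | exact Or.inl rfl
        | exact Or.inr (Or.inl rfl)
        | exact Or.inr (Or.inr rfl)
  have h1 : Hb1 ∈ S ∨ HV2 ∈ S := by
    refine refl_mem hS 1 _ _ (fun H hg => ?_)
    rcases classify H with rfl|rfl|rfl|rfl|rfl|rfl|rfl|rfl|rfl|rfl <;>
      first
        | exact absurd hg (by decide)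
        | exact Or.inl rfl
        | exact Or.inr (Or.inl rfl)
        | exact Or.inr (Or.inr rfl)
  have h2 : Hb2 ∈ S ∨ HV1 ∈ S := by
    refine refl_mem hS 2 _ _ (fun H hg => ?_)
    rcases classify H with rfl|rfl|rfl|rfl|rfl|rfl|rfl|rfl|rfl|rfl <;>
      first
        | exact absurd hg (by decide)
        | exact Or.inl rfl
        | exact Or.inr (Or.inl rfl)
        | exact Or.inr (Or.inr rfl)
  have h3 : Hb3 ∈ S ∨ HV2 ∈ S := by
    refine refl_mem hS 3 _ _ (fun H hg => ?_)
    rcases classify H with rfl|rfl|rfl|rfl|rfl|rfl|rfl|rfl|rfl|rfl <;>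
      first
        | exact absurd hg (by decide)
        | exact Or.inl rfl
        | exact Or.inr (Or.inl rfl)
        | exact Or.inr (Or.inr rfl)
  have hbot : Hbot ∉ S := fun h =>
    erase_redundant hS hHr h (sg_le (by decide)) (sg_ne (by decide))
  have hz : Hz ∉ S := fun h =>
    erase_redundant hS hHr h (sg_le (by decide)) (sg_ne (by decide))
  have htop : (⊤ : Subgroup G) ∉ S := fun h => hS.1.1 _ h rfl
  by_cases hV1 : HV1 ∈ S
  · have nb0 : Hb0 ∉ S := fun h =>
      erase_redundant hS hV1 h (sg_le (by decide)) (sg_ne (by decide))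
    have nb2 : Hb2 ∉ S := fun h =>
      erase_redundant hS hV1 h (sg_le (by decide)) (sg_ne (by decide))
    by_cases hV2 : HV2 ∈ S
    · have nb1 : Hb1 ∉ S := fun h =>
        erase_redundant hS hV2 h (sg_le (by decide)) (sg_ne (by decide))
      have nb3 : Hb3 ∉ S := fun h =>
        erase_redundant hS hV2 h (sg_le (by decide)) (sg_ne (by decide))
      left
      ext x
      simp only [S1, Finset.mem_insert, Finset.mem_singleton]
      constructor
      · intro hx
        rcases classify x with rfl|rfl|rfl|rfl|rfl|rfl|rfl|rfl|rfl|rfl <;> tauto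
      · rintro (rfl | rfl | rfl) <;> assumption
    · have hb1 : Hb1 ∈ S := h1.resolve_right hV2
      have hb3 : Hb3 ∈ S := h3.resolve_right hV2
      right; left
      ext x
      simp only [S2, Finset.mem_insert, Finset.mem_singleton]
      constructor
      · intro hx
        rcases classify x with rfl|rfl|rfl|rfl|rfl|rfl|rfl|rfl|rfl|rfl <;> tauto
      · rintro (rfl | rfl | rfl | rfl) <;> assumption
  · have hb0 : Hb0 ∈ S := h0.resolve_right hV1
    have hb2 : Hb2 ∈ S := h2.resolve_right hV1
    by_cases hV2 : HV2 ∈ S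
    · have nb1 : Hb1 ∉ S := fun h =>
        erase_redundant hS hV2 h (sg_le (by decide)) (sg_ne (by decide))
      have nb3 : Hb3 ∉ S := fun h =>
        erase_redundant hS hV2 h (sg_le (by decide)) (sg_ne (by decide))
      right; right; left
      ext x
      simp only [S3, Finset.mem_insert, Finset.mem_singleton]
      constructor
      · intro hx
        rcases classify x with rfl|rfl|rfl|rfl|rfl|rfl|rfl|rfl|rfl|rfl <;> tauto
      · rintro (rfl | rfl | rfl | rfl) <;> assumption
    · have hb1 : Hb1 ∈ S := h1.resolve_right hV2
      have hb3 : Hb3 ∈ S := h3.resolve_right hV2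
      right; right; right
      ext x
      simp only [S4, Finset.mem_insert, Finset.mem_singleton]
      constructor
      · intro hx
        rcases classify x with rfl|rfl|rfl|rfl|rfl|rfl|rfl|rfl|rfl|rfl <;> tauto
      · rintro (rfl | rfl | rfl | rfl | rfl) <;> assumption

lemma key (S : Finset (Subgroup G)) :
    IsIrredundantCover S ↔ S = S1 ∨ S = S2 ∨ S = S3 ∨ S = S4 := by
  constructor
  · exact irred_eq
  · rintro (rfl | rfl | rfl | rfl)
    exacts [irred_S1, irred_S2, irred_S3, irred_S4]

lemma nV1S3 : HV1 ∉ S3 := by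
  simp only [S3, Finset.mem_insert, Finset.mem_singleton, sg_inj]; decide
lemma nV1S4 : HV1 ∉ S4 := by
  simp only [S4, Finset.mem_insert, Finset.mem_singleton, sg_inj]; decide
lemma nV2S2 : HV2 ∉ S2 := by
  simp only [S2, Finset.mem_insert, Finset.mem_singleton, sg_inj]; decide
lemma nV2S4 : HV2 ∉ S4 := by
  simp only [S4, Finset.mem_insert, Finset.mem_singleton, sg_inj]; decide

lemma ne12 : S1 ≠ S2 := fun e => nV2S2 (e ▸ (by simp [S1] : HV2 ∈ S1))
lemma ne13 : S1 ≠ S3 := fun e => nV1S3 (e ▸ (by simp [S1] : HV1 ∈ S1))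
lemma ne14 : S1 ≠ S4 := fun e => nV1S4 (e ▸ (by simp [S1] : HV1 ∈ S1))
lemma ne23 : S2 ≠ S3 := fun e => nV1S3 (e ▸ (by simp [S2] : HV1 ∈ S2))
lemma ne24 : S2 ≠ S4 := fun e => nV1S4 (e ▸ (by simp [S2] : HV1 ∈ S2))
lemma ne34 : S3 ≠ S4 := fun e => nV2S4 (e ▸ (by simp [S3] : HV2 ∈ S3))

lemma beta_eq : beta G = 4 := by
  have e1 : {S : Finset (Subgroup G) | IsIrredundantCover S}
      = ({S1, S2, S3, S4} : Set (Finset (Subgroup G))) := by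
    ext S
    simpa using key S
  calc beta G = Nat.card {S : Finset (Subgroup G) | IsIrredundantCover S} := rfl
    _ = ({S1, S2, S3, S4} : Set (Finset (Subgroup G))).ncard := by
        rw [e1, Nat.card_coe_set_eq]
    _ = 4 := by
        rw [Set.ncard_insert_of_notMem (by
              simp only [Set.mem_insert_iff, Set.mem_singleton_iff]
              rintro (e | e | e)
              exacts [ne12 e, ne13 e, ne14 e]),
            Set.ncard_insert_of_notMem (by
              simp only [Set.mem_insert_iff, Set.mem_singleton_iff]
              rintro (e | e)
              exacts [ne23 e, ne24 e]),
            Set.ncard_insert_of_notMem (by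
              simp only [Set.mem_singleton_iff]
              exact ne34),
            Set.ncard_singleton]

end Stmt16

theorem stmt16 : beta (DihedralGroup 4) = 4 := Stmt16.beta_eq
end
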